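/- arXiv:2009.14686 — 6 statements merged into one kernel-verified Lean document; each statement's English description precedes it below -/
import Mathlib

section
/- Let an RDS on ℝ be given by a finitely supported measure μ on Homeo⁺(ℝ), and let the inverse RDS be generated by the measure μ̂ with μ̂(f) = μ(f⁻¹). If for the forward dynamics every orbit tends to +∞ almost surely (φ₊ ≡ 1), then for the inverse dynamics the probability that an orbit tends to +∞ is zero at every starting point (φ̂₊ ≡ 0). -/
/-!
Let `Gₙ = f_{g₀} ∘ ⋯ ∘ f_{g_{n-1}}`. The inverse iterate is `F̂ₙ = Gₙ⁻¹`, so by monotonicity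
`x < F̂ₙ x ↔ Gₙ x < x`. Now `Gₙ` is `Fₙ` evaluated on the reversed word `(g_{n-1}, …, g₀)`, which
has the same law as `(g₀, …, g_{n-1})` by independence; hence `P(x < F̂ₙ x) = P(Fₙ x < x)`, and
this tends to `0` since `Fₙ x → +∞` almost surely. If `F̂ₙ x → +∞` then `x < F̂ₙ x` for all
`n ≥ N`, for some `N`; for each `N` that event has probability at most `⨅ n ≥ N, P(x < F̂ₙ x) = 0`.
-/

open MeasureTheory ProbabilityTheory Filter Set
open scoped Topology

section WordComp

variable {ι α β : Type*}

/-- `wordComp f n w = f (w (n-1)) ∘ ⋯ ∘ f (w 0)`: the first letter acts first. -/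
def wordComp (f : ι → α → α) : (n : ℕ) → (Fin n → ι) → α → α
  | 0, _ => id
  | n + 1, w => f (w (Fin.last n)) ∘ wordComp f n (Fin.init w)

theorem wordComp_succ' (f : ι → α → α) :
    ∀ (n : ℕ) (w : Fin (n + 1) → ι), wordComp f (n + 1) w = wordComp f n (Fin.tail w) ∘ f (w 0)
  | 0, _ => rfl
  | n + 1, w => by
    rw [wordComp, wordComp_succ' f n, wordComp, Fin.tail_init_eq_init_tail]
    rfl

theorem eq_wordComp {f : ι → α → α} {F : ℕ → β → α → α} {g : ℕ → β → ι}
    (h0 : ∀ b x, F 0 b x = x) (hsucc : ∀ n b x, F (n + 1) b x = f (g n b) (F n b x)) :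
    ∀ n b, F n b = wordComp f n (fun k => g k b)
  | 0, b => funext (h0 b)
  | n + 1, b => funext fun x => by rw [hsucc, eq_wordComp h0 hsucc n b]; rfl

theorem strictMono_wordComp [Preorder α] {f : ι → α → α} (hf : ∀ i, StrictMono (f i)) :
    ∀ n w, StrictMono (wordComp f n w)
  | 0, _ => strictMono_id
  | n + 1, _ => (hf _).comp (strictMono_wordComp hf n _)

theorem rightInverse_wordComp_rev {f finv : ι → α → α}
    (hinv : ∀ i, Function.RightInverse (finv i) (f i)) :
    ∀ n w, Function.RightInverse (wordComp finv n (w ∘ Fin.rev)) (wordComp f n w)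
  | 0, _ => fun _ => rfl
  | n + 1, w => fun x => by
    have htail : Fin.tail (w ∘ Fin.rev) = Fin.init w ∘ Fin.rev := by
      funext k; simp [Fin.tail, Fin.init, Fin.rev_succ]
    rw [wordComp_succ' finv, htail]
    simp only [wordComp, Function.comp_apply, Fin.rev_zero,
      rightInverse_wordComp_rev hinv n (Fin.init w) _, hinv _ _]

theorem lt_wordComp_rev_iff [LinearOrder α] {f finv : ι → α → α} (hf : ∀ i, StrictMono (f i))
    (hinv : ∀ i, Function.RightInverse (finv i) (f i)) (n : ℕ) (w : Fin n → ι) (x : α) :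
    x < wordComp finv n (w ∘ Fin.rev) x ↔ wordComp f n w x < x := by
  rw [← (strictMono_wordComp hf n w).lt_iff_lt, rightInverse_wordComp_rev hinv n w x]

end WordComp

theorem ProbabilityTheory.iIndepFun.map_comp_equiv_eq {Ω ι β : Type*} [MeasurableSpace Ω]
    [MeasurableSpace β] [Fintype ι] {P : Measure Ω} {g : ι → Ω → β} {μ : Measure β}
    (hmeas : ∀ i, AEMeasurable (g i) P) (hindep : iIndepFun g P) (hlaw : ∀ i, P.map (g i) = μ)
    (σ : ι ≃ ι) :
    P.map (fun ω i => g (σ i) ω) = P.map (fun ω i => g i ω) := by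
  rw [(hindep.precomp σ.injective).map_fun_eq_pi_map (fun i => hmeas _),
    hindep.map_fun_eq_pi_map hmeas]
  congr 1
  funext i
  rw [hlaw, hlaw]

theorem measure_setOf_eventually_eq_zero {Ω : Type*} [MeasurableSpace Ω] {P : Measure Ω}
    {p : ℕ → Ω → Prop} (h : Tendsto (fun n => P {ω | p n ω}) atTop (𝓝 0)) :
    P {ω | ∀ᶠ n in atTop, p n ω} = 0 := by
  have hsub : {ω | ∀ᶠ n in atTop, p n ω} ⊆ ⋃ N, ⋂ n ≥ N, {ω | p n ω} := fun ω hω => by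
    simpa using eventually_atTop.1 hω
  refine measure_mono_null hsub (measure_iUnion_null fun N => ?_)
  refine le_antisymm (ge_of_tendsto h ?_) zero_le
  filter_upwards [eventually_ge_atTop N] with n hn
  exact measure_mono (biInter_subset_of_mem hn)

theorem tendsto_measure_setOf_lt_of_ae_tendsto_atTop {Ω : Type*} [MeasurableSpace Ω]
    {P : Measure Ω} [IsFiniteMeasure P] {X : ℕ → Ω → ℝ} (hX : ∀ n, Measurable (X n))
    (h : ∀ᵐ ω ∂P, Tendsto (fun n => X n ω) atTop atTop) (c : ℝ) :
    Tendsto (fun n => P {ω | X n ω < c}) atTop (𝓝 0) := by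
  simpa using tendsto_measure_of_ae_tendsto_indicator_of_isFiniteMeasure atTop
    MeasurableSet.empty (fun n => measurableSet_lt (hX n) measurable_const)
    (h.mono fun ω hω => (hω.eventually_ge_atTop c).mono fun n hn => by simpa using hn)

theorem measure_lt_wordComp_inv_eq {Ω ι α : Type*} [MeasurableSpace Ω] {P : Measure Ω}
    [Countable ι] [MeasurableSpace ι] [MeasurableSingletonClass ι] [LinearOrder α]
    {f finv : ι → α → α} (hf : ∀ i, StrictMono (f i))
    (hinv : ∀ i, Function.RightInverse (finv i) (f i)) {g : ℕ → Ω → ι}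
    (hg : ∀ n, Measurable (g n)) (hindep : iIndepFun g P) {μ : Measure ι}
    (hlaw : ∀ n, P.map (g n) = μ) (n : ℕ) (x : α) :
    P {ω | x < wordComp finv n (fun k => g k ω) x} =
      P {ω | wordComp f n (fun k => g k ω) x < x} := by
  have hW : Measurable fun ω (k : Fin n) => g k ω := measurable_pi_lambda _ fun k => hg k
  have hWrev : Measurable fun ω (k : Fin n) => g (Fin.rev k) ω :=
    measurable_pi_lambda _ fun k => hg _
  have hlawW :
      P.map (fun ω (k : Fin n) => g (Fin.rev k) ω) = P.map (fun ω (k : Fin n) => g k ω) :=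
    iIndepFun.map_comp_equiv_eq (g := fun k : Fin n => g k) (fun k => (hg k).aemeasurable)
      (hindep.precomp Fin.val_injective) (fun k => hlaw k) Fin.revPerm
  have hset : {ω | x < wordComp finv n (fun k => g k ω) x}
      = (fun ω (k : Fin n) => g (Fin.rev k) ω) ⁻¹' {w | wordComp f n w x < x} := by
    ext ω
    simpa only [Function.comp_def, Fin.rev_rev, mem_ofPred_eq, mem_preimage] using
      lt_wordComp_rev_iff hf hinv n (fun k => g (Fin.rev k) ω) x
  rw [hset, ← Measure.map_apply hWrev .of_discrete, hlawW, Measure.map_apply hW .of_discrete]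
  rfl

theorem rds_forward_plus_implies_inverse_plus_zero_general
    {Ω : Type*} [MeasurableSpace Ω] (P : Measure Ω) [IsProbabilityMeasure P]
    {ι : Type*} [Fintype ι] [MeasurableSpace ι] [MeasurableSingletonClass ι]
    (f : ι → ℝ → ℝ)
    (hf : ∀ i, StrictMono (f i) ∧ Function.Bijective (f i))
    (g : ℕ → Ω → ι) (hgmeas : ∀ n, Measurable (g n))
    (hindep : iIndepFun g P)
    (μ : Measure ι) (hlaw : ∀ n, Measure.map (g n) P = μ)
    (F : ℕ → Ω → ℝ → ℝ)
    (hF0 : ∀ ω x, F 0 ω x = x)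
    (hFS : ∀ n ω x, F (n + 1) ω x = f (g n ω) (F n ω x))
    (finv : ι → ℝ → ℝ)
    (hfinv : ∀ i, Function.LeftInverse (finv i) (f i) ∧
      Function.RightInverse (finv i) (f i))
    (Fhat : ℕ → Ω → ℝ → ℝ)
    (hFhat0 : ∀ ω x, Fhat 0 ω x = x)
    (hFhatS : ∀ n ω x, Fhat (n + 1) ω x = finv (g n ω) (Fhat n ω x))
    (hforward : ∀ x : ℝ, P {ω | Tendsto (fun n => F n ω x) atTop atTop} = 1) :
    ∀ x : ℝ, P {ω | Tendsto (fun n => Fhat n ω x) atTop atTop} = 0 := by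
  intro x
  have hF := eq_wordComp hF0 hFS
  have hFhat := eq_wordComp hFhat0 hFhatS
  have hFmeas : ∀ n, Measurable fun ω => F n ω x := fun n => by
    simp only [hF]
    exact (Measurable.of_discrete (f := fun w => wordComp f n w x)).comp
      (measurable_pi_lambda _ fun k => hgmeas k)
  have hae : ∀ᵐ ω ∂P, Tendsto (fun n => F n ω x) atTop atTop :=
    (ae_iff_measure_eq (measurableSet_tendsto _ hFmeas).nullMeasurableSet).2
      (by rw [hforward x, measure_univ])
  have hdual : ∀ n, P {ω | x < Fhat n ω x} = P {ω | F n ω x < x} := fun n => by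
    simp only [hF, hFhat]
    exact measure_lt_wordComp_inv_eq (fun i => (hf i).1) (fun i => (hfinv i).2) hgmeas hindep
      hlaw n x
  refine measure_mono_null (fun ω hω => hω.eventually_gt_atTop x)
    (measure_setOf_eventually_eq_zero ?_)
  simpa only [hdual] using tendsto_measure_setOf_lt_of_ae_tendsto_atTop hFmeas hae x

/-- if for the forward dynamics every orbit tends to +∞ almost surely,
then for the inverse dynamics (i.i.d. applications of the inverse maps, with the same
probabilities) the probability of tending to +∞ is zero at every starting point. -/
theorem rds_forward_plus_implies_inverse_plus_zero
    {Ω : Type*} [MeasurableSpace Ω] (P : Measure Ω) [IsProbabilityMeasure P]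
    {ι : Type*} [Fintype ι] [MeasurableSpace ι] [MeasurableSingletonClass ι]
    (f : ι → ℝ → ℝ)
    (hf : ∀ i, StrictMono (f i) ∧ Function.Bijective (f i))
    (g : ℕ → Ω → ι) (hgmeas : ∀ n, Measurable (g n))
    (hindep : iIndepFun g P)
    (μ : Measure ι) [IsProbabilityMeasure μ] (hlaw : ∀ n, Measure.map (g n) P = μ)
    (F : ℕ → Ω → ℝ → ℝ)
    (hF0 : ∀ ω x, F 0 ω x = x)
    (hFS : ∀ n ω x, F (n + 1) ω x = f (g n ω) (F n ω x))
    (finv : ι → ℝ → ℝ)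
    (hfinv : ∀ i, Function.LeftInverse (finv i) (f i) ∧
      Function.RightInverse (finv i) (f i))
    (Fhat : ℕ → Ω → ℝ → ℝ)
    (hFhat0 : ∀ ω x, Fhat 0 ω x = x)
    (hFhatS : ∀ n ω x, Fhat (n + 1) ω x = finv (g n ω) (Fhat n ω x))
    (hforward : ∀ x : ℝ, P {ω | Tendsto (fun n => F n ω x) atTop atTop} = 1) :
    ∀ x : ℝ, P {ω | Tendsto (fun n => Fhat n ω x) atTop atTop} = 0 :=
  rds_forward_plus_implies_inverse_plus_zero_general P f hf g hgmeas hindep μ hlaw F hF0 hFS finv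
    hfinv Fhat hFhat0 hFhatS hforward
end

section
/- Consider the RDS on ℝ generated by the countable family of translations f_k(x) = x + (−1)^k e^{e^k}, k ≥ 1, applied with probabilities p_k = 1/(k(k+1)). Then for every starting point x ∈ ℝ and every compact interval J ⊂ ℝ, almost surely the random orbit F_n(x) visits J only finitely many times. -/
/-!
Write `S n = ∑ i < n, (-1) ^ k i * exp (exp (k i))` and let `M + 1` be the largest of the
`k i`, `i < n`. The summands with `k i = M + 1` all have the same sign and absolute value
`exp (exp (M + 1)) ≥ exp (exp M) ^ 2`, while every other summand is at most `exp (exp M)` in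
absolute value, so `|S n| ≥ exp (exp M) * (exp (exp M) - n)`. This exceeds `n` as soon as
`M ≥ √n`.

Since `P (k i ≤ s) ≤ 1 - 1 / (s + 1)`, independence gives
`P (k i ≤ √n for all i < n) ≤ exp (-√n / 2)`, which is summable. By Borel–Cantelli, almost
surely some `k i` with `i < n` exceeds `√n` for all large `n`, so `|x + S n| → ∞`.
-/

open MeasureTheory ProbabilityTheory Filter Set Real Finset
open scoped ENNReal

lemma sq_le_exp {t : ℝ} (ht : 0 ≤ t) : t ^ 2 ≤ exp t := by
  have h : t ≤ exp (t / 2) := by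
    nlinarith [quadratic_le_exp_of_nonneg (by positivity : 0 ≤ t / 2)]
  calc t ^ 2 ≤ exp (t / 2) ^ 2 := by gcongr
    _ = exp t := by rw [← exp_nat_mul]; ring_nf

lemma natCast_add_one_le_exp_exp_sqrt (n : ℕ) : (n : ℝ) + 1 ≤ exp (exp (Nat.sqrt n)) := by
  have hn : (n : ℝ) + 1 ≤ ((Nat.sqrt n : ℝ) + 1) ^ 2 := by
    exact_mod_cast (sq (Nat.sqrt n + 1)).symm ▸ Nat.lt_succ_sqrt n
  calc (n : ℝ) + 1 ≤ ((Nat.sqrt n : ℝ) + 1) ^ 2 := hn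
    _ ≤ exp ((Nat.sqrt n : ℝ) + 1) := sq_le_exp (by positivity)
    _ ≤ exp (exp (Nat.sqrt n)) := exp_le_exp.mpr (add_one_le_exp _)

lemma summable_exp_neg_mul_sqrt {c : ℝ} (hc : 0 < c) :
    Summable fun n : ℕ => exp (-(c * √n)) := by
  have ho := (isLittleO_pow_exp_pos_mul_atTop 4 hc).comp_tendsto
    (tendsto_sqrt_atTop.comp tendsto_natCast_atTop_atTop)
  refine (summable_one_div_nat_pow.2 one_lt_two).of_norm_bounded_eventually_nat ?_
  filter_upwards [ho.bound zero_lt_one, eventually_gt_atTop 0] with n hn hpos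
  have hsq : (√(n : ℝ)) ^ 4 = (n : ℝ) ^ 2 := by
    rw [show 4 = 2 * 2 from rfl, pow_mul, sq_sqrt (Nat.cast_nonneg n)]
  simp only [Function.comp, hsq, one_mul, norm_pow, Real.norm_natCast,
    norm_of_nonneg (exp_pos _).le] at hn
  rw [norm_of_nonneg (exp_pos _).le, exp_neg, one_div]
  exact inv_anti₀ (by positivity) hn

lemma sum_Ioc_one_div_mul_add_one {s m : ℕ} (h : s ≤ m) :
    ∑ j ∈ Ioc s m, (1 : ℝ) / (j * (j + 1)) = 1 / (s + 1) - 1 / (m + 1) := by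
  induction m, h using Nat.le_induction with
  | base => simp
  | succ m hsm ih =>
    rw [sum_Ioc_succ_top hsm, ih]
    push_cast
    field_simp
    ring

lemma exp_exp_sq_le_exp_exp_add_one (x : ℝ) : exp (exp x) ^ 2 ≤ exp (exp (x + 1)) := by
  have he : (2 : ℝ) ≤ exp 1 := by linarith [add_one_le_exp (1 : ℝ)]
  rw [← exp_nat_mul, exp_le_exp, exp_add]
  push_cast
  nlinarith [exp_pos x]

lemma exp_exp_mul_sub_card_le_abs_sum {ι : Type*} (s : Finset ι) (v : ι → ℕ) (M : ℕ)
    (hle : ∀ i ∈ s, v i ≤ M + 1) (hex : ∃ i ∈ s, v i = M + 1) :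
    exp (exp M) * (exp (exp M) - #s) ≤ |∑ i ∈ s, (-1 : ℝ) ^ v i * exp (exp (v i))| := by
  classical
  set Y := exp (exp (M : ℝ))
  set f : ι → ℝ := fun i => (-1 : ℝ) ^ v i * exp (exp (v i))
  set T := s.filter (fun i => v i = M + 1)
  set R := s.filter (fun i => ¬ v i = M + 1)
  have hT : |∑ i ∈ T, f i| = #T * exp (exp ((M : ℝ) + 1)) := by
    rw [sum_congr rfl fun i hi => by simp only [f, (mem_filter.1 hi).2]; push_cast; rfl,
      sum_const, nsmul_eq_mul, abs_mul, abs_mul, abs_pow, abs_neg, abs_one, one_pow, one_mul,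
      Nat.abs_cast, abs_of_pos (exp_pos _)]
  have hTcard : (1 : ℝ) ≤ #T := by
    obtain ⟨i, hi, hvi⟩ := hex
    exact_mod_cast card_pos.2 ⟨i, mem_filter.2 ⟨hi, hvi⟩⟩
  have hR : |∑ i ∈ R, f i| ≤ #s * Y := by
    calc _ ≤ ∑ i ∈ R, |f i| := abs_sum_le_sum_abs _ _
      _ ≤ #R • Y := by
        refine sum_le_card_nsmul _ _ _ fun i hi => ?_
        obtain ⟨his, hne⟩ := mem_filter.1 hi
        have : (v i : ℝ) ≤ M := by exact_mod_cast Nat.le_of_lt_succ ((hle i his).lt_of_ne hne)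
        simpa [f, abs_mul, Y] using this
      _ ≤ #s * Y := by
        rw [nsmul_eq_mul]
        exact mul_le_mul_of_nonneg_right (by exact_mod_cast card_filter_le _ _) (exp_pos _).le
  have hY := exp_exp_sq_le_exp_exp_add_one M
  rw [← sum_filter_add_sum_filter_not s (fun i => v i = M + 1)]
  nlinarith [abs_sub_abs_le_abs_add (∑ i ∈ T, f i) (∑ i ∈ R, f i),
    exp_pos (exp ((M : ℝ) + 1))]

lemma natCast_add_one_le_abs_sum_of_sqrt_lt (v : ℕ → ℕ) {n : ℕ}
    (h : ∃ i < n, Nat.sqrt n < v i) :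
    (n : ℝ) + 1 ≤ |∑ i ∈ range n, (-1 : ℝ) ^ v i * exp (exp (v i))| := by
  obtain ⟨i₀, hi₀, hlt⟩ := h
  obtain ⟨j, hj, hmax⟩ := (range n).exists_max_image v ⟨i₀, mem_range.2 hi₀⟩
  have hi₀j := hmax i₀ (mem_range.2 hi₀)
  obtain ⟨M, hM⟩ : ∃ M, v j = M + 1 := Nat.exists_eq_add_one.2 (by omega)
  have hY : (n : ℝ) + 1 ≤ exp (exp M) :=
    (natCast_add_one_le_exp_exp_sqrt n).trans (by gcongr; omega)
  have hS := exp_exp_mul_sub_card_le_abs_sum (range n) v M (fun i hi => hM ▸ hmax i hi)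
    ⟨j, hj, hM⟩
  rw [card_range] at hS
  nlinarith

section

variable {Ω : Type*} [MeasurableSpace Ω] {P : Measure Ω} [IsProbabilityMeasure P]

lemma measureReal_setOf_le_le_one_sub {g : Ω → ℕ} (hg : Measurable g)
    (hlaw : ∀ j : ℕ, 1 ≤ j →
      P {ω | g ω = j} = (1 : ℝ≥0∞) / ((j : ℝ≥0∞) * ((j : ℝ≥0∞) + 1)))
    (s : ℕ) : P.real {ω | g ω ≤ s} ≤ 1 - 1 / (s + 1) := by
  have hbound : ∀ m, s ≤ m →
      P.real {ω | g ω ≤ s} ≤ 1 - (1 / (s + 1) - 1 / ((m : ℝ) + 1)) := by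
    intro m hm
    have hsum : P.real (g ⁻¹' ↑(Finset.Ioc s m)) = 1 / (s + 1) - 1 / ((m : ℝ) + 1) := by
      rw [← sum_measureReal_preimage_singleton (μ := P) _
          fun j _ => hg (measurableSet_singleton j),
        ← sum_Ioc_one_div_mul_add_one hm]
      refine sum_congr rfl fun j hj => ?_
      change (P {ω | g ω = j}).toReal = _
      rw [hlaw j (by simp at hj; omega)]
      simp [ENNReal.toReal_add]
    rw [← hsum, ← probReal_compl_eq_one_sub (hg (Finset.Ioc s m).measurableSet)]
    refine measureReal_mono fun ω hω => ?_
    simp_all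
  refine ge_of_tendsto ?_ (eventually_atTop.2 ⟨s, hbound⟩)
  simpa using (tendsto_const_nhds (x := (1 : ℝ))).sub
    ((tendsto_const_nhds (x := 1 / ((s : ℝ) + 1))).sub tendsto_one_div_add_atTop_nhds_zero_nat)

variable {k : ℕ → Ω → ℕ}

lemma measure_forall_lt_le_le_exp (hkmeas : ∀ n, Measurable (k n)) (hindep : iIndepFun k P)
    (hlaw : ∀ n j : ℕ, 1 ≤ j →
      P {ω | k n ω = j} = (1 : ℝ≥0∞) / ((j : ℝ≥0∞) * ((j : ℝ≥0∞) + 1)))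
    (n s : ℕ) : P {ω | ∀ i < n, k i ω ≤ s} ≤ ENNReal.ofReal (exp (-(n / (s + 1)))) := by
  have hset : {ω | ∀ i < n, k i ω ≤ s} = ⋂ i ∈ range n, k i ⁻¹' Set.Iic s := by
    ext; simp
  have hq : (0 : ℝ) ≤ 1 - 1 / (s + 1) := by
    rw [sub_nonneg, div_le_one (by positivity)]
    linarith [(Nat.cast_nonneg s : (0 : ℝ) ≤ s)]
  rw [hset, hindep.measure_inter_preimage_eq_mul _ fun _ _ => measurableSet_Iic]
  calc ∏ i ∈ range n, P (k i ⁻¹' Set.Iic s)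
      ≤ ∏ _i ∈ range n, ENNReal.ofReal (1 - 1 / (s + 1)) := by
        refine prod_le_prod' fun i _ => ?_
        rw [← ofReal_measureReal]
        exact ENNReal.ofReal_le_ofReal (measureReal_setOf_le_le_one_sub (hkmeas i) (hlaw i) s)
    _ = ENNReal.ofReal ((1 - 1 / (s + 1)) ^ n) := by
        rw [prod_const, card_range, ENNReal.ofReal_pow hq]
    _ ≤ ENNReal.ofReal (exp (-(n / (s + 1)))) := by
        refine ENNReal.ofReal_le_ofReal ?_
        calc (1 - 1 / ((s : ℝ) + 1)) ^ n ≤ exp (-(1 / (s + 1))) ^ n :=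
              pow_le_pow_left₀ hq (one_sub_le_exp_neg _) n
          _ = exp (-(n / (s + 1))) := by rw [← exp_nat_mul]; ring_nf

lemma ae_eventually_exists_sqrt_lt (hkmeas : ∀ n, Measurable (k n)) (hindep : iIndepFun k P)
    (hlaw : ∀ n j : ℕ, 1 ≤ j →
      P {ω | k n ω = j} = (1 : ℝ≥0∞) / ((j : ℝ≥0∞) * ((j : ℝ≥0∞) + 1))) :
    ∀ᵐ ω ∂P, ∀ᶠ n in atTop, ∃ i < n, Nat.sqrt n < k i ω := by
  have hbound (n : ℕ) :
      P {ω | ∀ i < n, k i ω ≤ Nat.sqrt n} ≤ ENNReal.ofReal (exp (-(1 / 2 * √n))) := by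
    refine (measure_forall_lt_le_le_exp hkmeas hindep hlaw n _).trans
      (ENNReal.ofReal_le_ofReal (exp_le_exp.2 (neg_le_neg ?_)))
    have hs : (Nat.sqrt n : ℝ) ≤ √n := Real.nat_sqrt_le_real_sqrt
    have hsn : √(n : ℝ) ≤ n :=
      (sqrt_le_left n.cast_nonneg).2 (by exact_mod_cast Nat.le_self_pow two_ne_zero n)
    rw [le_div_iff₀ (by positivity)]
    nlinarith [mul_self_sqrt (Nat.cast_nonneg n : (0 : ℝ) ≤ n), sqrt_nonneg (n : ℝ)]
  have hsum : ∑' n, P {ω | ∀ i < n, k i ω ≤ Nat.sqrt n} ≠ ∞ :=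
    ne_top_of_le_ne_top (summable_exp_neg_mul_sqrt one_half_pos).tsum_ofReal_ne_top
      (ENNReal.tsum_le_tsum hbound)
  filter_upwards [ae_eventually_notMem hsum] with ω hω
  simpa using hω

end

/-- for the RDS of translations f_k(x) = x + (-1)^k e^{e^k} applied with
probabilities 1/(k(k+1)), every orbit almost surely visits each compact interval only
finitely many times. -/
theorem rds_monster_finitely_many_visits
    {Ω : Type*} [MeasurableSpace Ω] (P : Measure Ω) [IsProbabilityMeasure P]
    (k : ℕ → Ω → ℕ) (hkmeas : ∀ n, Measurable (k n))
    (hindep : iIndepFun k P)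
    (hlaw : ∀ n j : ℕ, 1 ≤ j →
      P {ω | k n ω = j} = (1 : ℝ≥0∞) / ((j : ℝ≥0∞) * ((j : ℝ≥0∞) + 1))) :
    ∀ x a b : ℝ, ∀ᵐ ω ∂P,
      {n : ℕ | (x + ∑ i ∈ Finset.range n,
        (-1 : ℝ) ^ (k i ω) * Real.exp (Real.exp (k i ω))) ∈ Set.Icc a b}.Finite := by
  intro x a b
  filter_upwards [ae_eventually_exists_sqrt_lt hkmeas hindep hlaw] with ω hω
  have hfar : ∀ᶠ n in atTop, (x + ∑ i ∈ Finset.range n,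
      (-1 : ℝ) ^ (k i ω) * Real.exp (Real.exp (k i ω))) ∉ Set.Icc a b := by
    filter_upwards [hω, tendsto_natCast_atTop_atTop.eventually_gt_atTop (|x| + |a| + |b|)]
      with n hn hR ⟨ha, hb⟩
    have hS := natCast_add_one_le_abs_sum_of_sqrt_lt (fun i => k i ω) hn
    have hS' : |∑ i ∈ Finset.range n, (-1 : ℝ) ^ (k i ω) * Real.exp (Real.exp (k i ω))| ≤
        |x| + |a| + |b| :=
      abs_le.2 ⟨by linarith [neg_abs_le a, le_abs_self x, abs_nonneg b],
        by linarith [le_abs_self b, neg_abs_le x, abs_nonneg a]⟩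
    linarith
  rw [← Nat.cofinite_eq_atTop] at hfar
  simpa using eventually_cofinite.1 hfar
end

section
/- Consider the RDS on ℝ generated by translations f_{±k}(x) = x ± e^{e^k}, k ≥ 1, each of f_{+k} and f_{−k} applied with probability (1/2)·1/(k(k+1)). Then for every starting point x and every compact interval J, almost surely the random orbit visits J only finitely many times; in particular the dynamics is not recurrent even though the step distribution is symmetric. -/
/-!
Write `c_j` for the net number of steps `±e^{e^j}` taken at level `j` during the first `n`
steps. Since `e^{e^J}` dwarfs `J n e^{e^{J-1}}`, a displacement of size at most `R` forces
`c_j = 0`, hence an even number of steps at level `j`, for every `j ≥ 2 log (n + R + 1)`.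
Expanding the indicator of "every level of a window `A` is hit an even number of times" in the
characters `∏ i, (-1)^[level of step i ∈ B]`, `B ⊆ A`, and using independence, its probability
is at most `(3/4)^|A|` as soon as level `1`, which carries half of the mass, is not in `A` and
each level of `A` is expected to be hit at least `1/2` times.
A window of `5 (log₂ n + 1)` levels between `2 log (n + R + 1)` and `√n` makes the probability of
being in `[a, b]` at time `n` at most `n⁻²`, and Borel–Cantelli concludes.
-/

open MeasureTheory ProbabilityTheory Filter Set Real
open scoped ENNReal Finset

lemma mul_mul_exp_exp_pred_add_lt_exp_exp {N R : ℝ} (hN : 0 ≤ N) (hR : 0 ≤ R) {J : ℕ}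
    (hJ : 2 * log (N + R + 1) ≤ J) :
    J * N * exp (exp (J - 1)) + R < exp (exp J) := by
  set t := exp ((J : ℝ) - 1)
  have hJt : (J : ℝ) ≤ t := by linarith [add_one_le_exp ((J : ℝ) - 1)]
  have hexpt : (J : ℝ) + 1 ≤ exp t := by linarith [add_one_le_exp t]
  have hNR : N + R + 1 ≤ exp (t / 2) := by
    rw [← exp_log (by positivity : 0 < N + R + 1)]
    exact exp_le_exp.2 (by linarith)
  have hexpJ : 5 / 2 * t ≤ exp J := by
    have : exp (J : ℝ) = exp 1 * t := by rw [← exp_add]; ring_nf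
    rw [this]
    exact mul_le_mul_of_nonneg_right (by linarith [exp_one_gt_d9]) (exp_pos _).le
  calc J * N * exp t + R < exp t * ((J + 1) * (N + R + 1)) := by
        have h1 : 1 ≤ exp t := one_le_exp (exp_pos _).le
        have h2 : R + 1 ≤ (J + 1) * (N + R + 1) - J * N := by
          nlinarith [(J.cast_nonneg : (0 : ℝ) ≤ J)]
        nlinarith [mul_le_mul h1 h2 (by linarith) (by linarith)]
    _ ≤ exp t * (exp t * exp (t / 2)) := by gcongr
    _ = exp (5 / 2 * t) := by rw [← exp_add, ← exp_add]; ring_nf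
    _ ≤ exp (exp J) := exp_le_exp.2 hexpJ

lemma exp_exp_sub_le_abs_sum_range_succ {c : ℕ → ℤ} {N : ℝ} (hc : ∀ j, |(c j : ℝ)| ≤ N)
    {J : ℕ} (hcJ : c J ≠ 0) :
    exp (exp J) - J * N * exp (exp (J - 1)) ≤
      |∑ j ∈ Finset.range (J + 1), c j * exp (exp j)| := by
  have htop : exp (exp J) ≤ |c J * exp (exp J)| := by
    rw [abs_mul, abs_of_pos (exp_pos _)]
    exact le_mul_of_one_le_left (exp_pos _).le (by exact_mod_cast Int.one_le_abs hcJ)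
  have hlow : |∑ j ∈ Finset.range J, c j * exp (exp j)| ≤ J * N * exp (exp (J - 1)) := by
    calc |∑ j ∈ Finset.range J, c j * exp (exp j)|
        ≤ ∑ j ∈ Finset.range J, |(c j : ℝ) * exp (exp j)| := Finset.abs_sum_le_sum_abs _ _
      _ ≤ ∑ _j ∈ Finset.range J, N * exp (exp (J - 1)) := by
        refine Finset.sum_le_sum fun j hj => ?_
        have hjJ : (j : ℝ) ≤ J - 1 := by
          rw [le_sub_iff_add_le]
          exact_mod_cast Finset.mem_range.1 hj
        rw [abs_mul, abs_of_pos (exp_pos _)]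
        exact mul_le_mul (hc j) (by gcongr) (exp_pos _).le ((abs_nonneg _).trans (hc j))
      _ = J * N * exp (exp (J - 1)) := by simp [mul_assoc]
  rw [Finset.sum_range_succ]
  have := abs_sub_abs_le_abs_sub (c J * exp (exp J))
    (-∑ j ∈ Finset.range J, c j * exp (exp j))
  rw [abs_neg, sub_neg_eq_add, add_comm] at this
  linarith

lemma coeff_eq_zero_of_abs_sum_int_mul_exp_exp_le {c : ℕ → ℤ} {N R : ℝ}
    (hc : ∀ j, |(c j : ℝ)| ≤ N) {M : ℕ}
    (hsum : |∑ j ∈ Finset.range M, c j * exp (exp j)| ≤ R) {j : ℕ} (hjM : j < M)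
    (hj : 2 * log (N + R + 1) ≤ j) : c j = 0 := by
  by_contra hcj
  set S := (Finset.range M).filter (c · ≠ 0)
  have hS : S.Nonempty := ⟨j, Finset.mem_filter.2 ⟨Finset.mem_range.2 hjM, hcj⟩⟩
  obtain ⟨hJM, hcJ⟩ := Finset.mem_filter.1 (S.max'_mem hS)
  set J := S.max' hS
  have hjJ : j ≤ J := S.le_max' j (Finset.mem_filter.2 ⟨Finset.mem_range.2 hjM, hcj⟩)
  have htrunc : ∑ i ∈ Finset.range M, (c i : ℝ) * exp (exp i) =
      ∑ i ∈ Finset.range (J + 1), (c i : ℝ) * exp (exp i) := by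
    refine (Finset.sum_subset (Finset.range_subset_range.2 (Finset.mem_range.1 hJM)) ?_).symm
    intro i hiM hiJ
    have : c i = 0 := by
      by_contra h
      exact hiJ (Finset.mem_range.2
        (Nat.lt_succ_of_le (S.le_max' i (Finset.mem_filter.2 ⟨hiM, h⟩))))
    simp [this]
  have hN : 0 ≤ N := (abs_nonneg _).trans (hc 0)
  have hR : 0 ≤ R := (abs_nonneg _).trans hsum
  have hJ : 2 * log (N + R + 1) ≤ J := hj.trans (by exact_mod_cast hjJ)
  have hlower := exp_exp_sub_le_abs_sum_range_succ hc hcJ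
  rw [← htrunc] at hlower
  linarith [mul_mul_exp_exp_pred_add_lt_exp_exp hN hR hJ]

lemma intCast_sum_sign_eq_card {ι : Type*} (s : Finset ι) (ε : ι → Bool) :
    ((∑ i ∈ s, if ε i then (1 : ℤ) else -1 : ℤ) : ZMod 2) = #s := by
  push_cast
  rw [Finset.card_eq_sum_ones, Nat.cast_sum]
  refine Finset.sum_congr rfl fun i _ => ?_
  cases ε i <;> decide

lemma even_card_fiber_of_abs_sum_sign_mul_exp_exp_le {ι : Type*} (s : Finset ι) (k : ι → ℕ)
    (ε : ι → Bool) {R : ℝ}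
    (hsum : |∑ i ∈ s, (if ε i then (1 : ℝ) else -1) * exp (exp (k i))| ≤ R) {j : ℕ}
    (hj : 2 * log (#s + R + 1) ≤ j) : Even #{i ∈ s | k i = j} := by
  set c : ℕ → ℤ := fun j => ∑ i ∈ s with k i = j, if ε i then 1 else -1
  have hc : ∀ j, |(c j : ℝ)| ≤ #s := by
    intro j
    calc |(c j : ℝ)| ≤ ∑ i ∈ s with k i = j, |(if ε i then (1 : ℝ) else -1)| := by
          simp only [c, Int.cast_sum, apply_ite (Int.cast : ℤ → ℝ), Int.cast_one, Int.cast_neg]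
          exact Finset.abs_sum_le_sum_abs _ _
      _ = #{i ∈ s | k i = j} := by simp [apply_ite]
      _ ≤ #s := by exact_mod_cast Finset.card_filter_le _ _
  set M := s.sup k + 1
  have hkM : ∀ i ∈ s, k i < M := fun i hi => Nat.lt_succ_of_le (Finset.le_sup hi)
  have hregroup : ∑ i ∈ s, (if ε i then (1 : ℝ) else -1) * exp (exp (k i)) =
      ∑ j ∈ Finset.range M, c j * exp (exp j) := by
    rw [← Finset.sum_fiberwise_of_maps_to (g := k) (t := Finset.range M)
      fun i hi => Finset.mem_range.2 (hkM i hi)]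
    refine Finset.sum_congr rfl fun j _ => ?_
    simp only [c, Int.cast_sum, Finset.sum_mul]
    refine Finset.sum_congr rfl fun i hi => ?_
    rw [(Finset.mem_filter.1 hi).2]
    split_ifs <;> simp
  by_cases hjM : j < M
  · have hcj := coeff_eq_zero_of_abs_sum_int_mul_exp_exp_le hc (hregroup ▸ hsum) hjM hj
    rw [← ZMod.natCast_eq_zero_iff_even, ← intCast_sum_sign_eq_card]
    change ((c j : ℤ) : ZMod 2) = 0
    rw [hcj, Int.cast_zero]
  · rw [Finset.filter_false_of_mem fun i hi (hki : k i = j) => hjM (hki ▸ hkM i hi)]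
    exact Even.zero

lemma prod_sign_eq_prod_neg_one_pow {ι α : Type*} [DecidableEq α] (x : ι → α)
    (s : Finset ι) (B : Finset α) :
    ∏ i ∈ s, (if x i ∈ B then (-1 : ℝ) else 1) = ∏ j ∈ B, (-1) ^ #{i ∈ s | x i = j} := by
  rw [Finset.prod_ite, Finset.prod_const, Finset.prod_const_one, mul_one,
    Finset.prod_pow_eq_pow_sum,
    Finset.card_eq_sum_card_fiberwise (s := s.filter (x · ∈ B)) (t := B)
      fun i hi => (Finset.mem_filter.1 hi).2]
  congr 1
  refine Finset.sum_congr rfl fun j hj => ?_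
  rw [Finset.filter_filter]
  congr 1
  exact Finset.filter_congr fun i _ => ⟨fun h => h.2, fun h => ⟨h ▸ hj, h⟩⟩

lemma sum_powerset_prod_sign {ι α : Type*} [DecidableEq α] (x : ι → α) (s : Finset ι)
    (A : Finset α) :
    ∑ B ∈ A.powerset, ∏ i ∈ s, (if x i ∈ B then (-1 : ℝ) else 1) =
      if ∀ j ∈ A, Even #{i ∈ s | x i = j} then 2 ^ #A else 0 := by
  simp_rw [prod_sign_eq_prod_neg_one_pow, ← Finset.prod_one_add]
  split_ifs with h
  · rw [← Finset.prod_const]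
    exact Finset.prod_congr rfl fun j hj => by rw [(h j hj).neg_one_pow]; norm_num
  · obtain ⟨j, hj, hodd⟩ : ∃ j ∈ A, ¬Even #{i ∈ s | x i = j} := by simpa using h
    exact Finset.prod_eq_zero hj (by rw [(Nat.not_even_iff_odd.1 hodd).neg_one_pow]; norm_num)

section Independence

variable {Ω α : Type*} [MeasurableSpace Ω] {P : Measure Ω} [MeasurableSpace α]

lemma ProbabilityTheory.iIndepFun.integral_prod_range_comp {X : ℕ → Ω → α}
    (hX : iIndepFun X P) (hXm : ∀ i, Measurable (X i)) {f : α → ℝ} (hf : Measurable f) (n : ℕ) :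
    ∫ ω, ∏ i ∈ Finset.range n, f (X i ω) ∂P = ∏ i ∈ Finset.range n, ∫ ω, f (X i ω) ∂P := by
  have := (hX.precomp (Fin.val_injective (n := n))).integral_fun_prod_comp (f := fun _ => f)
    (fun i => (hXm i).aemeasurable) (fun _ => hf.aestronglyMeasurable)
  simpa only [Finset.prod_range] using this

lemma integral_sign_comp [IsProbabilityMeasure P] [DecidableEq α] {Y : Ω → α}
    (hY : Measurable Y) (B : Finset α) (hB : MeasurableSet (B : Set α)) :
    ∫ ω, (if Y ω ∈ B then (-1 : ℝ) else 1) ∂P = 1 - 2 * P.real (Y ⁻¹' B) := by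
  have hmeas : MeasurableSet (Y ⁻¹' B) := hY hB
  have : (fun ω => if Y ω ∈ B then (-1 : ℝ) else 1) =
      fun ω => 1 - 2 * (Y ⁻¹' B).indicator 1 ω := by
    funext ω
    by_cases h : Y ω ∈ B
    · simp [h]; norm_num
    · simp [h]
  rw [this, integral_sub (integrable_const 1) (((integrable_const 1).indicator hmeas).const_mul 2),
    integral_const_mul, integral_indicator_one hmeas]
  simp

end Independence

section Parity

variable {Ω α : Type*} [MeasurableSpace Ω] {P : Measure Ω} [IsProbabilityMeasure P]
  [MeasurableSpace α] [MeasurableSingletonClass α] [DecidableEq α] {X : ℕ → Ω → α}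

lemma integral_prod_sign_le (hX : iIndepFun X P) (hXm : ∀ i, Measurable (X i)) {n : ℕ}
    {B : Finset α} (hB : ∀ i, P.real (X i ⁻¹' B) ≤ 1 / 2)
    (hmass : ∀ j ∈ B, 1 / 2 ≤ ∑ i ∈ Finset.range n, P.real (X i ⁻¹' {j})) :
    ∫ ω, ∏ i ∈ Finset.range n, (if X i ω ∈ B then (-1 : ℝ) else 1) ∂P ≤ (1 / 2) ^ #B := by
  have hsign : Measurable fun a : α => if a ∈ B then (-1 : ℝ) else 1 :=
    Measurable.ite B.measurableSet measurable_const measurable_const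
  have hmass_sum : (#B : ℝ) / 2 ≤ ∑ i ∈ Finset.range n, P.real (X i ⁻¹' B) := by
    have hsingle : ∀ i, ∑ j ∈ B, P.real (X i ⁻¹' {j}) = P.real (X i ⁻¹' B) := fun i =>
      sum_measureReal_preimage_singleton B fun j _ => hXm i (measurableSet_singleton j)
    simp_rw [← hsingle]
    rw [Finset.sum_comm, div_eq_mul_one_div, ← nsmul_eq_mul]
    exact Finset.card_nsmul_le_sum _ _ _ hmass
  have hexp : exp (-1) ≤ 1 / 2 := by
    rw [exp_neg, one_div]
    exact inv_anti₀ two_pos (by linarith [add_one_le_exp 1])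
  rw [hX.integral_prod_range_comp hXm hsign]
  simp_rw [integral_sign_comp (hXm _) B B.measurableSet]
  calc ∏ i ∈ Finset.range n, (1 - 2 * P.real (X i ⁻¹' B))
      ≤ ∏ i ∈ Finset.range n, exp (-(2 * P.real (X i ⁻¹' B))) :=
        Finset.prod_le_prod (fun i _ => by linarith [hB i])
          fun i _ => by linarith [add_one_le_exp (-(2 * P.real (X i ⁻¹' B)))]
    _ = exp (-1) ^ #B * exp (#B - 2 * ∑ i ∈ Finset.range n, P.real (X i ⁻¹' B)) := by
        rw [← exp_sum, ← exp_nat_mul, ← exp_add, Finset.mul_sum, Finset.sum_neg_distrib]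
        ring_nf
    _ ≤ (1 / 2) ^ #B * 1 := by
        gcongr
        exact exp_le_one_iff.2 (by linarith)
    _ = (1 / 2) ^ #B := mul_one _

lemma measurableSet_forall_even_card (hXm : ∀ i, Measurable (X i)) (A : Finset α) (n : ℕ) :
    MeasurableSet {ω | ∀ j ∈ A, Even #{i ∈ Finset.range n | X i ω = j}} := by
  have hcard : ∀ j, Measurable fun ω => #{i ∈ Finset.range n | X i ω = j} := fun j => by
    simp_rw [Finset.card_filter]
    exact Finset.measurable_sum _ fun i _ =>
      Measurable.ite (hXm i (measurableSet_singleton j)) measurable_const measurable_const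
  have : {ω | ∀ j ∈ A, Even #{i ∈ Finset.range n | X i ω = j}} =
      ⋂ j ∈ A, (fun ω => #{i ∈ Finset.range n | X i ω = j}) ⁻¹' {m | Even m} := by
    ext; simp
  rw [this]
  exact Finset.measurableSet_biInter A fun j _ => hcard j (Set.to_countable _).measurableSet

lemma measureReal_forall_even_card_le (hX : iIndepFun X P) (hXm : ∀ i, Measurable (X i))
    {n : ℕ} {A : Finset α} (hA : ∀ i, P.real (X i ⁻¹' A) ≤ 1 / 2)
    (hmass : ∀ j ∈ A, 1 / 2 ≤ ∑ i ∈ Finset.range n, P.real (X i ⁻¹' {j})) :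
    P.real {ω | ∀ j ∈ A, Even #{i ∈ Finset.range n | X i ω = j}} ≤ (3 / 4) ^ #A := by
  set χ : Finset α → Ω → ℝ := fun B ω => ∏ i ∈ Finset.range n, if X i ω ∈ B then -1 else 1
  have hχ : ∀ B, Integrable (χ B) P := fun B => by
    refine .of_bound (Finset.measurable_prod _ fun i _ => Measurable.ite
      ((hXm i) B.measurableSet) measurable_const measurable_const).aestronglyMeasurable 1
      (ae_of_all _ fun ω => ?_)
    simp [χ, Finset.prod_ite]
  have hindicator : {ω | ∀ j ∈ A, Even #{i ∈ Finset.range n | X i ω = j}}.indicator 1 =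
      fun ω => (2 ^ #A)⁻¹ * ∑ B ∈ A.powerset, χ B ω := by
    funext ω
    simp only [χ, sum_powerset_prod_sign, Set.indicator_apply, Set.mem_ofPred_eq, Pi.one_apply]
    split_ifs <;> simp
  calc P.real {ω | ∀ j ∈ A, Even #{i ∈ Finset.range n | X i ω = j}}
      = (2 ^ #A)⁻¹ * ∑ B ∈ A.powerset, ∫ ω, χ B ω ∂P := by
        rw [← integral_indicator_one (measurableSet_forall_even_card hXm A n), hindicator,
          integral_const_mul, integral_finsetSum _ fun B _ => hχ B]
    _ ≤ (2 ^ #A)⁻¹ * ∑ B ∈ A.powerset, (1 / 2) ^ #B := by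
        gcongr with B hB
        have hBA := Finset.mem_powerset.1 hB
        exact integral_prod_sign_le hX hXm
          (fun i => (measureReal_mono (preimage_mono (Finset.coe_subset.2 hBA))).trans (hA i))
          fun j hj => hmass j (hBA hj)
    _ = (3 / 4) ^ #A := by
        have := Finset.prod_one_add (f := fun _ => (1 / 2 : ℝ)) A
        simp only [Finset.prod_const] at this
        rw [← this, ← inv_pow, ← mul_pow]
        norm_num

end Parity

section Levels

variable {Ω : Type*} [MeasurableSpace Ω] {P : Measure Ω} [IsProbabilityMeasure P]

lemma measureReal_fst_preimage_singleton {g : Ω → ℕ × Bool} (hg : Measurable g)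
    (hlaw : ∀ j : ℕ, ∀ s : Bool, 1 ≤ j →
      P {ω | g ω = (j, s)} = (1 : ℝ≥0∞) / (2 * (j : ℝ≥0∞) * ((j : ℝ≥0∞) + 1)))
    {j : ℕ} (hj : 1 ≤ j) :
    P.real ((Prod.fst ∘ g) ⁻¹' {j}) = 1 / (j * (j + 1)) := by
  have hsplit : (Prod.fst ∘ g) ⁻¹' {j} = {ω | g ω = (j, true)} ∪ {ω | g ω = (j, false)} := by
    ext ω
    simp only [Set.mem_preimage, Function.comp_apply, Set.mem_singleton_iff, Set.mem_union,
      Set.mem_ofPred_eq]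
    generalize g ω = p
    rcases p with ⟨k, _ | _⟩ <;> simp
  have hside : ∀ s, P.real {ω | g ω = (j, s)} = 1 / (2 * j * (j + 1)) := fun s => by
    rw [measureReal_def, hlaw j s hj]
    simp [ENNReal.toReal_mul, ENNReal.toReal_add]
  have hdisj : Disjoint {ω | g ω = (j, true)} {ω | g ω = (j, false)} :=
    Set.disjoint_left.2 fun ω h1 h2 => by simp_all
  rw [hsplit, measureReal_union hdisj (hg (measurableSet_singleton _)), hside, hside]
  field_simp
  ring

lemma measureReal_fst_preimage_le_half {g : Ω → ℕ × Bool} (hg : Measurable g)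
    (hlaw : ∀ j : ℕ, ∀ s : Bool, 1 ≤ j →
      P {ω | g ω = (j, s)} = (1 : ℝ≥0∞) / (2 * (j : ℝ≥0∞) * ((j : ℝ≥0∞) + 1)))
    {A : Set ℕ} (hA : 1 ∉ A) :
    P.real ((Prod.fst ∘ g) ⁻¹' A) ≤ 1 / 2 := by
  have hfst : Measurable (Prod.fst ∘ g) := measurable_fst.comp hg
  calc P.real ((Prod.fst ∘ g) ⁻¹' A)
      ≤ P.real ((Prod.fst ∘ g) ⁻¹' {1})ᶜ :=
        measureReal_mono fun ω hω h1 => hA (h1 ▸ hω)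
    _ = 1 / 2 := by
        rw [probReal_compl_eq_one_sub (hfst (measurableSet_singleton 1)),
          measureReal_fst_preimage_singleton hg hlaw le_rfl]
        norm_num

lemma half_le_sum_measureReal_fst_preimage_singleton {g : ℕ → Ω → ℕ × Bool}
    (hg : ∀ i, Measurable (g i))
    (hlaw : ∀ i : ℕ, ∀ j : ℕ, ∀ s : Bool, 1 ≤ j →
      P {ω | g i ω = (j, s)} = (1 : ℝ≥0∞) / (2 * (j : ℝ≥0∞) * ((j : ℝ≥0∞) + 1)))
    {n j : ℕ} (hj : 1 ≤ j) (hjn : (j + 1) ^ 2 ≤ n) :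
    1 / 2 ≤ ∑ i ∈ Finset.range n, P.real ((Prod.fst ∘ g i) ⁻¹' {j}) := by
  have hjn' : ((j : ℝ) + 1) ^ 2 ≤ n := by exact_mod_cast hjn
  rw [Finset.sum_eq_card_nsmul fun i _ => measureReal_fst_preimage_singleton (hg i) (hlaw i) hj,
    Finset.card_range, nsmul_eq_mul, mul_one_div, le_div_iff₀ (by positivity)]
  nlinarith

end Levels

lemma ae_finite_setOf_mem_of_summable {Ω : Type*} [MeasurableSpace Ω] {μ : Measure Ω}
    [IsFiniteMeasure μ] {s : ℕ → Set Ω} {f : ℕ → ℝ} (hf : Summable f)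
    (hs : ∀ᶠ n in atTop, μ.real (s n) ≤ f n) :
    ∀ᵐ ω ∂μ, {n | ω ∈ s n}.Finite := by
  have hsum : Summable fun n => μ.real (s n) :=
    hf.of_norm_bounded_eventually_nat (by simpa [norm_of_nonneg measureReal_nonneg] using hs)
  have htsum : ∑' n, μ (s n) ≠ ∞ := by
    have hreal : ∀ n, μ (s n) = ENNReal.ofReal (μ.real (s n)) := fun n =>
      (ofReal_measureReal).symm
    simp_rw [hreal, ← ENNReal.ofReal_tsum_of_nonneg (fun _ => measureReal_nonneg) hsum]
    exact ENNReal.ofReal_ne_top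
  filter_upwards [ae_eventually_notMem htsum] with ω hω
  simpa [← Nat.cofinite_eq_atTop] using hω

lemma eventually_two_mul_log_add_five_mul_logb_add_le_sqrt (R : ℝ) :
    ∀ᶠ x : ℝ in atTop, 2 * log (x + R + 1) + 5 * logb 2 x + 8 ≤ √x := by
  have hlog : ∀ᶠ x : ℝ in atTop, log x ≤ 1 / 28 * √x := by
    filter_upwards [(isLittleO_log_rpow_atTop (r := 1 / 2) (by norm_num)).bound
      (c := 1 / 28) (by norm_num), eventually_ge_atTop 1] with x hx hx1
    rwa [norm_of_nonneg (log_nonneg hx1), norm_of_nonneg (by positivity), ← sqrt_eq_rpow] at hx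
  filter_upwards [hlog, tendsto_sqrt_atTop.eventually_ge_atTop 16,
    eventually_ge_atTop (|R| + 2)] with x hlogx hsqrt hx
  have hR := abs_nonneg R
  have hlogx0 : 0 ≤ log x := log_nonneg (by linarith)
  have h1 : log (x + R + 1) ≤ 2 * log x := by
    rw [← Nat.cast_two, ← log_pow]
    exact log_le_log (by linarith [neg_abs_le R]) (by nlinarith [le_abs_self R])
  have h2 : logb 2 x ≤ 2 * log x := by
    rw [logb, div_le_iff₀ (log_pos one_lt_two)]
    nlinarith [log_two_gt_d9]
  linarith

lemma three_fourths_pow_le_one_div_sq {n : ℕ} (hn : n ≠ 0) :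
    (3 / 4 : ℝ) ^ (5 * (Nat.log 2 n + 1)) ≤ 1 / n ^ 2 := by
  set l := Nat.log 2 n
  have hn4 : (n : ℝ) ^ 2 ≤ 4 ^ (l + 1) := by
    have : (n : ℝ) ≤ 2 ^ (l + 1) := by exact_mod_cast (Nat.lt_pow_succ_log_self one_lt_two n).le
    calc (n : ℝ) ^ 2 ≤ (2 ^ (l + 1)) ^ 2 := by gcongr
      _ = 4 ^ (l + 1) := by rw [← pow_mul, mul_comm, pow_mul]; norm_num
  rw [pow_mul, le_div_iff₀ (by positivity)]
  calc ((3 / 4 : ℝ) ^ 5) ^ (l + 1) * n ^ 2 ≤ ((3 / 4) ^ 5) ^ (l + 1) * 4 ^ (l + 1) := by gcongr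
    _ = ((3 / 4) ^ 5 * 4) ^ (l + 1) := (mul_pow _ _ _).symm
    _ ≤ 1 := pow_le_one₀ (by norm_num) (by norm_num)

noncomputable def levelThreshold (R : ℝ) (n : ℕ) : ℕ := ⌈2 * log (n + R + 1)⌉₊ + 2

/-- Levels at which a walk within distance `R` of its start at time `n` has taken an even number
of steps; there are enough of them that `(3/4) ^ #(levelWindow R n) ≤ n⁻²`. -/
noncomputable def levelWindow (R : ℝ) (n : ℕ) : Finset ℕ :=
  Finset.Ico (levelThreshold R n) (levelThreshold R n + 5 * (Nat.log 2 n + 1))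

lemma card_levelWindow (R : ℝ) (n : ℕ) : #(levelWindow R n) = 5 * (Nat.log 2 n + 1) := by
  simp [levelWindow]

lemma two_le_and_two_mul_log_le_of_mem_levelWindow {R : ℝ} {n j : ℕ}
    (hj : j ∈ levelWindow R n) : 2 ≤ j ∧ 2 * log (n + R + 1) ≤ j := by
  have := (Finset.mem_Ico.1 hj).1
  unfold levelThreshold at this
  exact ⟨by omega, (Nat.le_ceil _).trans (by exact_mod_cast (by omega : _ ≤ j))⟩

lemma eventually_forall_mem_levelWindow_sq_le {R : ℝ} (hR : 0 ≤ R) :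
    ∀ᶠ n : ℕ in atTop, ∀ j ∈ levelWindow R n, (j + 1) ^ 2 ≤ n := by
  filter_upwards [tendsto_natCast_atTop_atTop.eventually
    (eventually_two_mul_log_add_five_mul_logb_add_le_sqrt R)] with n hn j hj
  have hL : 0 ≤ log (n + R + 1) := log_nonneg (by linarith [(n.cast_nonneg : (0 : ℝ) ≤ n)])
  have hceil : (⌈2 * log (n + R + 1)⌉₊ : ℝ) < 2 * log (n + R + 1) + 1 :=
    Nat.ceil_lt_add_one (by positivity)
  have hj : (j : ℝ) + 1 ≤ ⌈2 * log (n + R + 1)⌉₊ + 2 + 5 * (Nat.log 2 n + 1) := by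
    exact_mod_cast (Finset.mem_Ico.1 hj).2
  have hlog2 := natLog_le_logb n 2
  push_cast at hlog2
  have hsqrt : (j : ℝ) + 1 ≤ √n := by linarith
  exact_mod_cast (Real.le_sqrt (by positivity) n.cast_nonneg).1 hsqrt

lemma forall_mem_levelWindow_even_card_of_abs_sum_le (n : ℕ) (k : ℕ → ℕ) (ε : ℕ → Bool)
    {R : ℝ} (hsum : |∑ i ∈ Finset.range n, (if ε i then (1 : ℝ) else -1) * exp (exp (k i))| ≤ R) :
    ∀ j ∈ levelWindow R n, Even #{i ∈ Finset.range n | k i = j} := fun j hj =>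
  even_card_fiber_of_abs_sum_sign_mul_exp_exp_le _ k ε hsum
    (by simpa using (two_le_and_two_mul_log_le_of_mem_levelWindow hj).2)

/-- for the symmetric RDS of translations f_{±k}(x) = x ± e^{e^k} applied
with probabilities (1/2)·1/(k(k+1)) each, every orbit almost surely visits each compact
interval only finitely many times: the dynamics is not recurrent despite symmetry. -/
theorem rds_symmetric_monster_finitely_many_visits
    {Ω : Type*} [MeasurableSpace Ω] (P : Measure Ω) [IsProbabilityMeasure P]
    (g : ℕ → Ω → ℕ × Bool) (hgmeas : ∀ n, Measurable (g n))
    (hindep : iIndepFun g P)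
    (hlaw : ∀ n : ℕ, ∀ j : ℕ, ∀ s : Bool, 1 ≤ j →
      P {ω | g n ω = (j, s)} =
        (1 : ℝ≥0∞) / (2 * (j : ℝ≥0∞) * ((j : ℝ≥0∞) + 1))) :
    ∀ x a b : ℝ, ∀ᵐ ω ∂P,
      {n : ℕ | (x + ∑ i ∈ Finset.range n,
        (if (g i ω).2 then (1 : ℝ) else -1) * Real.exp (Real.exp ((g i ω).1))) ∈
          Set.Icc a b}.Finite := by
  intro x a b
  set R := |a - x| + |b - x|
  refine ae_finite_setOf_mem_of_summable (summable_one_div_nat_pow.2 one_lt_two) ?_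
  filter_upwards [eventually_forall_mem_levelWindow_sq_le (by positivity : 0 ≤ R),
    eventually_ne_atTop 0] with n hwindow hn
  calc _ ≤ P.real {ω | ∀ j ∈ levelWindow R n, Even #{i ∈ Finset.range n | (g i ω).1 = j}} :=
        measureReal_mono fun ω hω => forall_mem_levelWindow_even_card_of_abs_sum_le n _ _
          (abs_le.2 ⟨by linarith [hω.1, neg_abs_le (a - x), abs_nonneg (b - x)],
            by linarith [hω.2, le_abs_self (b - x), abs_nonneg (a - x)]⟩)
    _ ≤ (3 / 4) ^ #(levelWindow R n) :=
        measureReal_forall_even_card_le (hindep.comp _ fun _ => measurable_fst)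
          (fun i => measurable_fst.comp (hgmeas i))
          (fun i => measureReal_fst_preimage_le_half (hgmeas i) (hlaw i) fun h1 => by
            have := (two_le_and_two_mul_log_le_of_mem_levelWindow h1).1; omega)
          fun j hj => half_le_sum_measureReal_fst_preimage_singleton hgmeas hlaw
            (by have := (two_le_and_two_mul_log_le_of_mem_levelWindow hj).1; omega)
            (hwindow j hj)
    _ ≤ 1 / n ^ 2 := card_levelWindow R n ▸ three_fourths_pow_le_one_div_sq hn
end

section
/- Let an RDS on ℝ be given by a finitely supported probability measure μ on Homeo⁺(ℝ) with weights p_i on maps f_i, and suppose φ₊(x) = P(F_n(x) → +∞) is not constant. Then the Stieltjes measure ν defined by ν([x, y]) = φ₊(y) − φ₊(x) (for continuity points x ≤ y of φ₊, extended as the Lebesgue–Stieltjes measure of φ₊) is a nonzero stationary measure for the inverse dynamics: ν = Σ_i p_i (f_i⁻¹)_* ν. -/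
open MeasureTheory ProbabilityTheory Filter Set Function
open scoped ENNReal NNReal Topology

/-!
Conditioning on the first map, the event that the orbit of `x` escapes to `+∞` is the event that
the orbit of `f i x` escapes under the shifted sequence of maps; the shift is independent of the
first map and has the same law, so `φ₊ x = ∑ i, p i * φ₊ (f i x)`. This identity survives the
passage to the right-continuous regularization `G` of the monotone function `φ₊`, and read as an
identity of Stieltjes functions, `G = ∑ i, p i • G ∘ f i`, it is the stationarity of the
Stieltjes measure `ν` of `G`, because `G ∘ f i` is the Stieltjes function of `(f i)⁻¹_* ν`.
-/

namespace ProbabilityTheory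

variable {Ω β : Type*} [MeasurableSpace Ω] [MeasurableSpace β] {P : Measure Ω} {X : ℕ → Ω → β}

lemma iIndepFun.indepFun_head_tail (hX : ∀ n, Measurable (X n)) (h : iIndepFun X P) :
    IndepFun (X 0) (fun ω n => X (n + 1) ω) P := by
  rw [IndepFun_iff_Indep]
  refine indep_of_indep_of_le
    (indep_iSup_of_disjoint (fun n => (hX n).comap_le) h.iIndep
      (Set.disjoint_singleton_left.2 (lt_irrefl 0) : Disjoint {0} (Set.Ioi 0)))
    (le_biSup (fun n => MeasurableSpace.comap (X n) inferInstance) rfl) ?_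
  simp only [MeasurableSpace.pi, MeasurableSpace.comap_iSup, MeasurableSpace.comap_comp,
    iSup_le_iff]
  exact fun n => le_biSup (fun n => MeasurableSpace.comap (X n) inferInstance) n.succ_pos

lemma iIndepFun.map_tail_eq (hX : ∀ n, Measurable (X n)) (h : iIndepFun X P)
    (hlaw : ∀ n, P.map (X (n + 1)) = P.map (X n)) :
    P.map (fun ω n => X (n + 1) ω) = P.map (fun ω n => X n ω) := by
  rw [(h.precomp Nat.succ_injective).map_fun_eq_infinitePi_map (fun n => hX (n + 1)),
    h.map_fun_eq_infinitePi_map hX]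
  simp only [hlaw]

end ProbabilityTheory

section iterSeq

variable {ι α : Type*}

def iterSeq (f : ι → α → α) (u : ℕ → ι) : ℕ → α → α
  | 0, x => x
  | n + 1, x => f (u n) (iterSeq f u n x)

variable (f : ι → α → α)

lemma iterSeq_succ' (u : ℕ → ι) (n : ℕ) (x : α) :
    iterSeq f u (n + 1) x = iterSeq f (fun k => u (k + 1)) n (f (u 0) x) := by
  induction n with
  | zero => rfl
  | succ n ih => exact congrArg (f (u (n + 1))) ih

lemma monotone_iterSeq [Preorder α] (hf : ∀ i, Monotone (f i)) (u : ℕ → ι) (n : ℕ) :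
    Monotone (iterSeq f u n) := by
  induction n with
  | zero => exact monotone_id
  | succ n ih => exact fun x y hxy => hf (u n) (ih hxy)

lemma measurable_iterSeq_apply [MeasurableSpace ι] [Countable ι] [MeasurableSingletonClass ι]
    [MeasurableSpace α] (hf : ∀ i, Measurable (f i)) (n : ℕ) (x : α) :
    Measurable fun u : ℕ → ι => iterSeq f u n x := by
  induction n with
  | zero => exact measurable_const
  | succ n ih =>
    exact (measurable_from_prod_countable_left (f := fun p : (ℕ → ι) × ι =>
      f p.2 (iterSeq f p.1 n x)) fun i => (hf i).comp ih).comp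
      (measurable_id.prodMk (measurable_pi_apply n) : Measurable fun u : ℕ → ι => (u, u n))

end iterSeq

section escapeSet

variable {ι : Type*} (f : ι → ℝ → ℝ)

def escapeSet (x : ℝ) : Set (ℕ → ι) :=
  {u | Tendsto (fun n => iterSeq f u n x) atTop atTop}

lemma mem_escapeSet_iff_tail (u : ℕ → ι) (x : ℝ) :
    u ∈ escapeSet f x ↔ (fun k => u (k + 1)) ∈ escapeSet f (f (u 0) x) := by
  simp only [escapeSet, mem_ofPred_eq, ← iterSeq_succ']
  exact (tendsto_add_atTop_iff_nat 1).symm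

lemma escapeSet_mono (hf : ∀ i, Monotone (f i)) : Monotone (escapeSet f) :=
  fun _ _ hxy _ hu => tendsto_atTop_mono (fun n => monotone_iterSeq f hf _ n hxy) hu

lemma measurableSet_escapeSet [MeasurableSpace ι] [Countable ι] [MeasurableSingletonClass ι]
    (hf : ∀ i, Measurable (f i)) (x : ℝ) : MeasurableSet (escapeSet f x) :=
  measurableSet_tendsto atTop fun n => measurable_iterSeq_apply f hf n x

theorem measure_escapeSet_eq_sum {Ω : Type*} [MeasurableSpace Ω] {P : Measure Ω}
    [Fintype ι] [MeasurableSpace ι] [MeasurableSingletonClass ι] {μ : Measure ι}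
    {X : ℕ → Ω → ι} (hX : ∀ n, Measurable (X n)) (hindep : iIndepFun X P)
    (hlaw : ∀ n, P.map (X n) = μ) (hf : ∀ i, Measurable (f i)) (x : ℝ) :
    P ((fun ω n => X n ω) ⁻¹' escapeSet f x)
      = ∑ i, μ {i} * P ((fun ω n => X n ω) ⁻¹' escapeSet f (f i x)) := by
  have := hindep.isProbabilityMeasure
  have hE := measurableSet_escapeSet f hf
  set S : Set (ι × (ℕ → ι)) := {p | p.2 ∈ escapeSet f (f p.1 x)}
  have hS : MeasurableSet S := by
    convert MeasurableSet.iUnion fun i => (measurableSet_singleton i).prod (hE (f i x))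
    ext ⟨i, u⟩
    simp [S]
  have hmeas : Measurable fun ω n => X n ω := measurable_pi_lambda _ hX
  have hmeas' : Measurable fun ω n => X (n + 1) ω := measurable_pi_lambda _ fun n => hX (n + 1)
  have hlaw_pair : P.map (fun ω => (X 0 ω, fun n => X (n + 1) ω))
      = μ.prod (P.map fun ω n => X n ω) := by
    rw [(hindep.indepFun_head_tail hX).map_prod_eq_prod_map_map (hX 0).aemeasurable
      hmeas'.aemeasurable, hlaw 0, hindep.map_tail_eq hX fun n => by rw [hlaw, hlaw]]
  calc P ((fun ω n => X n ω) ⁻¹' escapeSet f x)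
      = P.map (fun ω => (X 0 ω, fun n => X (n + 1) ω)) S := by
        rw [Measure.map_apply ((hX 0).prodMk hmeas') hS]
        congr 1
        ext ω
        exact mem_escapeSet_iff_tail f _ x
    _ = ∑ i, P ((fun ω n => X n ω) ⁻¹' escapeSet f (f i x)) * μ {i} := by
        rw [hlaw_pair, Measure.prod_apply hS, lintegral_fintype]
        simp only [S, preimage_ofPred_eq, ofPred_mem_eq, Measure.map_apply hmeas (hE _)]
    _ = _ := by simp only [mul_comm]

end escapeSet

namespace StieltjesFunction

variable {R : Type*} [LinearOrder R] [TopologicalSpace R]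

lemma smul_apply (c : ℝ≥0) (s : StieltjesFunction R) (x : R) : (c • s) x = c * s x := rfl

lemma sum_apply {ι : Type*} (t : Finset ι) (F : ι → StieltjesFunction R) (x : R) :
    (∑ i ∈ t, F i) x = ∑ i ∈ t, F i x := by
  induction t using Finset.cons_induction <;> simp [*]

variable [OrderTopology R]

def compOrderIso (s : StieltjesFunction R) (e : R ≃o R) : StieltjesFunction R where
  toFun := s ∘ e
  mono' := s.mono.comp e.monotone
  right_continuous' x :=
    (s.right_continuous (e x)).comp e.continuous.continuousWithinAt fun _ hy => e.monotone hy

@[simp] lemma compOrderIso_apply (s : StieltjesFunction R) (e : R ≃o R) (x : R) :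
    s.compOrderIso e x = s (e x) := rfl

variable [CompactIccSpace R] [MeasurableSpace R] [BorelSpace R] [SecondCountableTopology R]
  [DenselyOrdered R]

lemma measure_sum {ι : Type*} (t : Finset ι) (F : ι → StieltjesFunction R) :
    (∑ i ∈ t, F i).measure = ∑ i ∈ t, (F i).measure := by
  induction t using Finset.cons_induction <;> simp [*]

lemma measure_compOrderIso [NoMinOrder R] (s : StieltjesFunction R) (e : R ≃o R) :
    (s.compOrderIso e).measure = s.measure.map e.symm := by
  refine Measure.ext_of_Ioc' _ _ (fun a b _ => by simp [measure_Ioc]) fun a b _ => ?_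
  rw [Measure.map_apply e.symm.continuous.measurable measurableSet_Ioc, e.symm.preimage_Ioc,
    OrderIso.symm_symm, measure_Ioc, measure_Ioc, compOrderIso_apply, compOrderIso_apply]

theorem measure_eq_sum_smul_map_symm [NoMinOrder R] {ι : Type*} [Fintype ι]
    (s : StieltjesFunction R) (w : ι → ℝ≥0) (e : ι → R ≃o R)
    (h : ∀ x, s x = ∑ i, w i * s (e i x)) :
    s.measure = ∑ i, w i • s.measure.map (e i).symm := by
  have hs : s = ∑ i, w i • s.compOrderIso (e i) := by
    ext x
    simp only [h x, sum_apply, smul_apply, compOrderIso_apply]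
  conv_lhs => rw [hs]
  simp only [measure_sum, measure_smul, measure_compOrderIso]

end StieltjesFunction

namespace Monotone

variable {R : Type*} [LinearOrder R] [TopologicalSpace R] [OrderTopology R] {φ : R → ℝ}

theorem rightLim_eq_sum_comp [DenselyOrdered R] [NoMaxOrder R] {ι : Type*} [Fintype ι]
    (hφ : Monotone φ) (w : ι → ℝ) (e : ι → R ≃o R) (h : ∀ x, φ x = ∑ i, w i * φ (e i x))
    (x : R) : rightLim φ x = ∑ i, w i * rightLim φ (e i x) := by
  refine rightLim_eq_of_tendsto ((tendsto_finsetSum _ fun i _ => ?_).congr fun y => (h y).symm)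
  exact ((hφ.tendsto_rightLim (e i x)).comp
    ((e i).continuous.continuousWithinAt.tendsto_nhdsWithin fun _ hy => (e i).strictMono hy))
    |>.const_mul (w i)

variable [CompactIccSpace R] [MeasurableSpace R] [BorelSpace R] [SecondCountableTopology R]
  [DenselyOrdered R]

theorem measure_stieltjesFunction_Icc_of_continuousAt [NoMinOrder R] (hφ : Monotone φ) {x y : R}
    (hx : ContinuousAt φ x) (hy : ContinuousAt φ y) :
    hφ.stieltjesFunction.measure (Icc x y) = ENNReal.ofReal (φ y - φ x) := by
  have hcoe : ⇑hφ.stieltjesFunction = rightLim φ := funext hφ.stieltjesFunction_eq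
  rw [StieltjesFunction.measure_Icc, hcoe, leftLim_rightLim (hφ.tendsto_leftLim x),
    hx.continuousWithinAt.leftLim_eq, hy.continuousWithinAt.rightLim_eq]

theorem measure_stieltjesFunction_ne_zero_of_lt [NoMinOrder R] (hφ : Monotone φ) {a b : R}
    (hab : φ a < φ b) : hφ.stieltjesFunction.measure ≠ 0 := by
  obtain ⟨a', ha'⟩ := exists_lt a
  have hpos : 0 < hφ.stieltjesFunction b - hφ.stieltjesFunction a' := by
    rw [hφ.stieltjesFunction_eq, hφ.stieltjesFunction_eq]
    linarith [hφ.rightLim_le ha', hφ.le_rightLim (le_refl b)]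
  refine fun h0 => (ENNReal.ofReal_pos.2 hpos).ne' ?_
  rw [← StieltjesFunction.measure_Ioc, h0, Measure.coe_zero, Pi.zero_apply]

end Monotone

/-- if φ₊ is not constant, then the Lebesgue–Stieltjes measure of φ₊
is a nonzero stationary measure for the inverse dynamics. -/
theorem rds_stieltjes_of_phiPlus_stationary_for_inverse
    {Ω : Type*} [MeasurableSpace Ω] (P : Measure Ω) [IsProbabilityMeasure P]
    {ι : Type*} [Fintype ι] [MeasurableSpace ι] [MeasurableSingletonClass ι]
    (f : ι → ℝ → ℝ)
    (hf : ∀ i, StrictMono (f i) ∧ Function.Bijective (f i))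
    (g : ℕ → Ω → ι) (hgmeas : ∀ n, Measurable (g n))
    (hindep : iIndepFun g P)
    (μ : Measure ι) [IsProbabilityMeasure μ] (hlaw : ∀ n, Measure.map (g n) P = μ)
    (F : ℕ → Ω → ℝ → ℝ)
    (hF0 : ∀ ω x, F 0 ω x = x)
    (hFS : ∀ n ω x, F (n + 1) ω x = f (g n ω) (F n ω x))
    (hnonconst : ∃ x y : ℝ,
      P {ω | Tendsto (fun n => F n ω x) atTop atTop} ≠
        P {ω | Tendsto (fun n => F n ω y) atTop atTop}) :
    ∃ ν : Measure ℝ, ν ≠ 0 ∧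
      (∀ x y : ℝ, x ≤ y →
        ContinuousAt (fun t : ℝ => (P {ω | Tendsto (fun n => F n ω t) atTop atTop}).toReal) x →
        ContinuousAt (fun t : ℝ => (P {ω | Tendsto (fun n => F n ω t) atTop atTop}).toReal) y →
        ν (Set.Icc x y) =
          ENNReal.ofReal ((P {ω | Tendsto (fun n => F n ω y) atTop atTop}).toReal -
            (P {ω | Tendsto (fun n => F n ω x) atTop atTop}).toReal)) ∧
      (∀ A : Set ℝ, MeasurableSet A → ν A = ∑ i, μ {i} * ν (f i '' A)) := by
  have hF : ∀ n ω x, F n ω x = iterSeq f (fun k => g k ω) n x := fun n ω x => by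
    induction n with
    | zero => exact hF0 ω x
    | succ n ih => rw [hFS, ih]; rfl
  have hevent : ∀ t, {ω | Tendsto (fun n => F n ω t) atTop atTop}
      = (fun ω n => g n ω) ⁻¹' escapeSet f t := fun t => by
    simp only [hF]; rfl
  set φ : ℝ → ℝ := fun t => (P {ω | Tendsto (fun n => F n ω t) atTop atTop}).toReal
  have hmono : Monotone φ := fun x y hxy => by
    refine ENNReal.toReal_mono (measure_ne_top _ _) (measure_mono ?_)
    rw [hevent, hevent]
    exact preimage_mono (escapeSet_mono f (fun i => (hf i).1.monotone) hxy)
  have hharm : ∀ x, φ x = ∑ i, ((μ {i}).toNNReal : ℝ) * φ (f i x) := fun x => by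
    simp only [φ, hevent, measure_escapeSet_eq_sum f hgmeas hindep hlaw
      (fun i => (hf i).1.monotone.measurable) x]
    rw [ENNReal.toReal_sum fun i _ => ENNReal.mul_ne_top (measure_ne_top _ _) (measure_ne_top _ _)]
    simp only [ENNReal.toReal_mul, ENNReal.coe_toNNReal_eq_toReal]
  let e : ι → ℝ ≃o ℝ := fun i => (hf i).1.orderIsoOfSurjective (f i) (hf i).2.2
  have he : ∀ i, ⇑(e i) = f i := fun i => StrictMono.coe_orderIsoOfSurjective ..
  refine ⟨hmono.stieltjesFunction.measure, ?_,
    fun x y _ hx hy => hmono.measure_stieltjesFunction_Icc_of_continuousAt hx hy, fun A hA => ?_⟩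
  · obtain ⟨x, y, hxy⟩ := hnonconst
    have hne : φ x ≠ φ y := (ENNReal.toReal_eq_toReal_iff' (measure_ne_top _ _)
      (measure_ne_top _ _)).not.2 hxy
    rcases hne.lt_or_gt with h | h <;> exact hmono.measure_stieltjesFunction_ne_zero_of_lt h
  · have hstat := hmono.stieltjesFunction.measure_eq_sum_smul_map_symm
      (fun i => (μ {i}).toNNReal) e fun x => by
        simp only [hmono.stieltjesFunction_eq]
        exact hmono.rightLim_eq_sum_comp _ e hharm x
    rw [congrArg (· A) hstat, Measure.finsetSum_apply]
    refine Finset.sum_congr rfl fun i _ => ?_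
    rw [Measure.smul_apply, Measure.map_apply (e i).symm.continuous.measurable hA,
      ← (e i).image_eq_preimage_symm, ENNReal.smul_def, smul_eq_mul, ENNReal.coe_toNNReal
      (measure_ne_top _ _), he]
end

section
/- Let an RDS on ℝ be given by a finitely supported measure μ on Homeo⁺(ℝ) satisfying shiftability, and suppose there exists a probability stationary measure μ̂-stationary measure ν for the inverse dynamics. Then for the forward dynamics both φ₊ and φ₋ are strictly positive everywhere: every point tends to +∞ with positive probability and to −∞ with positive probability. Moreover the cumulative distribution function x ↦ ν((−∞, x]) equals φ₊ at its continuity points. -/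
/-!
Write `h = cdf ν`. Since every `f i` is an increasing bijection, `f i '' Iic y = Iic (f i y)`,
so stationarity of `ν` for the inverse dynamics says that `h` is harmonic for the forward one:
`h y = ∑ i, μ {i} * h (f i y)`. Thus `h (F n x)` is a bounded martingale and converges a.s.

Shiftability gives, for any compact interval, a word of positive probability mapping it
below `a` and another mapping it above `b`, where `h a < 1/2 < h b`. By Lévy's conditional
Borel–Cantelli lemma a trajectory that returns infinitely often to a compact set follows it
infinitely often by each of these words, so it visits both `Iic a` and `Ici b` infinitely often,
which is incompatible with the convergence of `h (F n x)`. Hence `F n x → ±∞` a.s., and dominated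
convergence gives `h x = 𝔼[lim h (F n x)] = φ₊ x` and `1 - h x = φ₋ x`.

Positivity of `h` and `1 - h` is shiftability again: the zero set of a nonnegative harmonic
function is invariant under the maps of positive weight, and such an invariant set is unbounded
above (or below), contradicting the limits of `h` at `±∞`.
-/

open MeasureTheory ProbabilityTheory Filter Set
open scoped Topology

theorem exists_mem_measure_singleton_ne_zero {α : Type*} [MeasurableSpace α] [Countable α]
    {μ : Measure α} {s : Set α} (hs : μ s ≠ 0) : ∃ i ∈ s, μ {i} ≠ 0 := by
  by_contra! h
  exact hs (by simpa using (measure_biUnion_null_iff s.to_countable).2 h)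

section InvariantSets

variable {α ι : Type*} [ConditionallyCompleteLinearOrder α] [TopologicalSpace α]
  [OrderTopology α] {f : ι → α → α} {L : Set ι} {S : Set α}

theorem not_bddAbove_of_mapsTo (hS : S.Nonempty) (hcont : ∀ i ∈ L, Continuous (f i))
    (hlt : ∀ y, ∃ i ∈ L, y < f i y) (hmaps : ∀ i ∈ L, MapsTo (f i) S S) : ¬BddAbove S := by
  intro hbdd
  obtain ⟨i, hi, hc⟩ := hlt (sSup S)
  have hnhds : ∀ᶠ y in 𝓝 (sSup S), sSup S < f i y :=
    (hcont i hi).continuousAt.eventually (lt_mem_nhds hc)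
  obtain ⟨y, hy, hyS⟩ := mem_closure_iff_nhds.1 (csSup_mem_closure hS hbdd) _ hnhds
  exact (le_csSup hbdd (hmaps i hi hyS)).not_gt hy

end InvariantSets

section Words

variable {α ι : Type*}

def applyWord (f : ι → α → α) (w : List ι) (x : α) : α :=
  w.foldl (fun y i => f i y) x

@[simp]
theorem applyWord_cons (f : ι → α → α) (i : ι) (w : List ι) (x : α) :
    applyWord f (i :: w) x = applyWord f w (f i x) := rfl

theorem applyWord_append_singleton (f : ι → α → α) (w : List ι) (i : ι) (x : α) :
    applyWord f (w ++ [i]) x = f i (applyWord f w x) := by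
  simp [applyWord]

theorem monotone_applyWord [Preorder α] {f : ι → α → α} (hf : ∀ i, Monotone (f i))
    (w : List ι) : Monotone (applyWord f w) := by
  induction w with
  | nil => exact monotone_id
  | cons i w ih => exact ih.comp (hf i)

variable [ConditionallyCompleteLinearOrder α] [TopologicalSpace α] [OrderTopology α]
  {f : ι → α → α} {L : Set ι}

theorem exists_lt_applyWord (hcont : ∀ i ∈ L, Continuous (f i))
    (hlt : ∀ y, ∃ i ∈ L, y < f i y) (x a : α) :
    ∃ w ≠ [], (∀ i ∈ w, i ∈ L) ∧ a < applyWord f w x := by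
  set S := {y | ∃ w ≠ [], (∀ i ∈ w, i ∈ L) ∧ applyWord f w x = y}
  have hS : S.Nonempty := by
    obtain ⟨i, hi, -⟩ := hlt x
    exact ⟨_, [i], List.cons_ne_nil _ _, by simpa using hi, rfl⟩
  have hmaps : ∀ i ∈ L, MapsTo (f i) S S := by
    rintro i hi _ ⟨w, -, hw, rfl⟩
    refine ⟨w ++ [i], by simp, ?_, applyWord_append_singleton f w i x⟩
    simpa [or_imp, forall_and] using ⟨hw, hi⟩
  obtain ⟨_, ⟨w, hne, hw, rfl⟩, ha⟩ :=
    not_bddAbove_iff.1 (not_bddAbove_of_mapsTo hS hcont hlt hmaps) a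
  exact ⟨w, hne, hw, ha⟩

theorem exists_applyWord_lt (hcont : ∀ i ∈ L, Continuous (f i))
    (hlt : ∀ y, ∃ i ∈ L, f i y < y) (x a : α) :
    ∃ w ≠ [], (∀ i ∈ w, i ∈ L) ∧ applyWord f w x < a :=
  exists_lt_applyWord (α := αᵒᵈ) hcont hlt x a

end Words

theorem exists_frequently_mul_add {p : ℕ → Prop} {m : ℕ} (hm : 0 < m)
    (h : ∃ᶠ n in atTop, p n) : ∃ r < m, ∃ᶠ k in atTop, p (k * m + r) := by
  by_contra! hcon
  have hall : ∀ᶠ k in atTop, ∀ r ∈ Finset.range m, ¬p (k * m + r) :=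
    (eventually_all_finset _).2 fun r hr => hcon r (Finset.mem_range.1 hr)
  refine h ((Nat.tendsto_div_const_atTop hm.ne').eventually hall |>.mono fun n hn => ?_)
  simpa [Nat.div_add_mod'] using hn (n % m) (Finset.mem_range.2 (Nat.mod_lt n hm))

theorem Monotone.abs_le_one_of_tendsto {h : ℝ → ℝ} (hmono : Monotone h)
    (hbot : Tendsto h atBot (𝓝 0)) (htop : Tendsto h atTop (𝓝 1)) (y : ℝ) : |h y| ≤ 1 :=
  abs_le.2 ⟨by linarith [hmono.le_of_tendsto hbot y], hmono.ge_of_tendsto htop y⟩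

theorem tendsto_atTop_or_atBot_of_frequently {u : ℕ → ℝ} {h : ℝ → ℝ}
    (hmono : Monotone h) {a b c : ℝ} (hab : h a < h b) (hc : Tendsto (h ∘ u) atTop (𝓝 c))
    (hvisit : ∀ N : ℕ, (∃ᶠ n in atTop, u n ∈ Icc (-N : ℝ) N) →
      (∃ᶠ n in atTop, u n ≤ a) ∧ ∃ᶠ n in atTop, b ≤ u n) :
    Tendsto u atTop atTop ∨ Tendsto u atTop atBot := by
  have hnot : ¬((∃ᶠ n in atTop, u n ≤ a) ∧ ∃ᶠ n in atTop, b ≤ u n) := fun ⟨ha, hb⟩ =>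
    hab.not_ge <| (ge_of_tendsto_of_frequently hc (hb.mono fun _ hn => hmono hn)).trans
      (le_of_tendsto_of_frequently hc (ha.mono fun _ hn => hmono hn))
  have hesc : ∀ N : ℕ, ∀ᶠ n in atTop, u n ∉ Icc (-N : ℝ) N :=
    fun N => not_frequently.1 fun hN => hnot (hvisit N hN)
  rcases not_and_or.1 hnot with ha | hb
  · refine .inl (tendsto_atTop.2 fun C => ?_)
    obtain ⟨N, hN⟩ := exists_nat_ge (max C (-a))
    filter_upwards [not_frequently.1 ha, hesc N] with n hna hnN
    simp only [mem_Icc, not_and_or, not_le] at hnN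
    rcases hnN with hlo | hhi <;> linarith [le_max_left C (-a), le_max_right C (-a)]
  · refine .inr (tendsto_atBot.2 fun C => ?_)
    obtain ⟨N, hN⟩ := exists_nat_ge (max (-C) b)
    filter_upwards [not_frequently.1 hb, hesc N] with n hnb hnN
    simp only [mem_Icc, not_and_or, not_le] at hnN
    rcases hnN with hlo | hhi <;> linarith [le_max_left (-C) b, le_max_right (-C) b]

section CondExp

variable {Ω : Type*} {mΩ : MeasurableSpace Ω} {μ : Measure Ω} [IsFiniteMeasure μ]

theorem condExp_indicator_of_indep {m m' : MeasurableSpace Ω} (hm : m ≤ mΩ) (hm' : m' ≤ mΩ)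
    (hind : Indep m' m μ) {Z : Ω → ℝ} (hZ : StronglyMeasurable[m] Z) (hZint : Integrable Z μ)
    {A : Set Ω} (hA : MeasurableSet[m'] A) :
    μ[A.indicator Z | m] =ᵐ[μ] fun ω => μ.real A * Z ω := by
  have hAint : Integrable (A.indicator (1 : Ω → ℝ)) μ :=
    (integrable_const 1).indicator (hm' _ hA)
  have hZA : A.indicator Z = Z * A.indicator 1 := by
    ext ω
    by_cases hω : ω ∈ A <;> simp [hω]
  have hcond : μ[A.indicator (1 : Ω → ℝ) | m] =ᵐ[μ] fun _ => μ.real A := by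
    have := condExp_indep_eq hm' hm ((stronglyMeasurable_one (β := ℝ)).indicator hA) hind
    rwa [integral_indicator_one (hm' _ hA)] at this
  rw [hZA]
  filter_upwards [condExp_mul_of_stronglyMeasurable_left hZ (hZA ▸ hZint.indicator (hm' _ hA))
    hAint, hcond] with ω h1 h2
  rw [h1, Pi.mul_apply, h2, mul_comm]

theorem ae_frequently_of_condExp_indicator_eq {ℱ : Filtration ℕ mΩ} {A B : ℕ → Set Ω}
    {δ : ℝ} (hδ : 0 < δ) (hA : ∀ k, MeasurableSet[ℱ (k + 1)] (A k))
    (hcond : ∀ k, μ[(A k).indicator 1 | ℱ k] =ᵐ[μ] fun ω => (B k).indicator 1 ω * δ) :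
    ∀ᵐ ω ∂μ, (∃ᶠ k in atTop, ω ∈ B k) → ∃ᶠ k in atTop, ω ∈ A k := by
  -- Lévy's Borel–Cantelli lemma is stated for `s` with `s n ∈ ℱ n`; here `s (k + 1) = A k`.
  let s : ℕ → Set Ω := fun n => Nat.casesOn n ∅ A
  have hs : ∀ n, MeasurableSet[ℱ n] (s n) := by
    rintro (_ | k)
    exacts [@MeasurableSet.empty _ (ℱ 0), hA k]
  filter_upwards [tendsto_sum_indicator_atTop_iff' hs, ae_all_iff.2 hcond] with ω hiff hω hB
  rw [Nat.frequently_atTop_iff_infinite, Set.infinite_iff_tendsto_sum_indicator_atTop hδ] at hB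
  rw [Nat.frequently_atTop_iff_infinite,
    Set.infinite_iff_tendsto_sum_indicator_atTop (zero_lt_one' ℝ)]
  have hBsum : ∀ k,
      {k | ω ∈ B k}.indicator (fun _ => δ) k = μ[(s (k + 1)).indicator 1 | ℱ k] ω := by
    intro k
    by_cases hk : ω ∈ B k <;> simp [s, hω, hk]
  have hAsum : ∀ k,
      (s (k + 1)).indicator (1 : Ω → ℝ) ω = {k | ω ∈ A k}.indicator (fun _ => 1) k := by
    intro k
    by_cases hk : ω ∈ A k <;> simp [s, hk]
  simpa only [hAsum] using hiff.2 (by simpa only [hBsum] using hB)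

end CondExp

section Harmonic

variable {ι α : Type*} [Fintype ι] [MeasurableSpace ι] {μ : Measure ι} {f : ι → α → α}
  {h : α → ℝ}

def IsHarmonic (μ : Measure ι) (f : ι → α → α) (h : α → ℝ) : Prop :=
  ∀ y, h y = ∑ i, μ.real {i} * h (f i y)

theorem IsHarmonic.one_sub [MeasurableSingletonClass ι] [IsProbabilityMeasure μ]
    (hh : IsHarmonic μ f h) : IsHarmonic μ f (fun y => 1 - h y) := by
  intro y
  simp only [mul_sub, mul_one, Finset.sum_sub_distrib, sum_measureReal_singleton,
    Finset.coe_univ, probReal_univ, ← hh y]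

theorem IsHarmonic.mapsTo_zero_set [IsFiniteMeasure μ] (hh : IsHarmonic μ f h)
    (h0 : ∀ y, 0 ≤ h y) {i : ι} (hi : μ {i} ≠ 0) :
    MapsTo (f i) {y | h y = 0} {y | h y = 0} := by
  intro y (hy : h y = 0)
  have hsum := (Finset.sum_eq_zero_iff_of_nonneg fun j _ =>
    mul_nonneg measureReal_nonneg (h0 (f j y))).1 ((hh y).symm.trans hy) i (Finset.mem_univ i)
  exact (mul_eq_zero.1 hsum).resolve_left ((measureReal_eq_zero_iff).not.2 hi)

variable [ConditionallyCompleteLinearOrder α] [TopologicalSpace α] [OrderTopology α]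

theorem IsHarmonic.pos_of_tendsto_atTop [IsFiniteMeasure μ] (hh : IsHarmonic μ f h)
    (h0 : ∀ y, 0 ≤ h y) {c : ℝ} (hc : c ≠ 0) (htop : Tendsto h atTop (𝓝 c))
    (hcont : ∀ i, Continuous (f i)) (hlt : ∀ y, ∃ i, μ {i} ≠ 0 ∧ y < f i y) (x : α) :
    0 < h x := by
  refine (h0 x).lt_of_ne fun hx => hc ?_
  have hunb := not_bddAbove_of_mapsTo (S := {y | h y = 0}) ⟨x, hx.symm⟩
    (fun i _ => hcont i) hlt fun i hi => hh.mapsTo_zero_set h0 hi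
  have hfreq : ∃ᶠ y in atTop, h y = 0 := by
    rw [frequently_atTop]
    intro a
    obtain ⟨y, hy, hay⟩ := not_bddAbove_iff.1 hunb a
    exact ⟨y, hay.le, hy⟩
  exact tendsto_nhds_unique_of_frequently_eq htop tendsto_const_nhds hfreq

theorem IsHarmonic.pos_of_tendsto_atBot [IsFiniteMeasure μ] (hh : IsHarmonic μ f h)
    (h0 : ∀ y, 0 ≤ h y) {c : ℝ} (hc : c ≠ 0) (hbot : Tendsto h atBot (𝓝 c))
    (hcont : ∀ i, Continuous (f i)) (hlt : ∀ y, ∃ i, μ {i} ≠ 0 ∧ f i y < y) (x : α) :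
    0 < h x :=
  IsHarmonic.pos_of_tendsto_atTop (α := αᵒᵈ) hh h0 hc hbot hcont hlt x

end Harmonic

theorem isHarmonic_cdf {ι : Type*} [Fintype ι] [MeasurableSpace ι] {μ : Measure ι}
    [IsFiniteMeasure μ] {f : ι → ℝ → ℝ} (hf : ∀ i, StrictMono (f i))
    (hsurj : ∀ i, Function.Surjective (f i)) {ν : Measure ℝ} [IsProbabilityMeasure ν]
    (hstat : ∀ A : Set ℝ, MeasurableSet A → ν A = ∑ i, μ {i} * ν (f i '' A)) :
    IsHarmonic μ f (cdf ν) := by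
  intro y
  have himage : ∀ i, f i '' Iic y = Iic (f i y) := fun i => by
    simpa using ((hf i).orderIsoOfSurjective (f i) (hsurj i)).image_Iic y
  rw [cdf_eq_real, measureReal_def, hstat _ measurableSet_Iic,
    ENNReal.toReal_sum fun i _ => by finiteness]
  simp [himage, cdf_eq_real, measureReal_def, ENNReal.toReal_mul]

theorem IsHarmonic.mem_Ioo {ι : Type*} [Fintype ι] [MeasurableSpace ι]
    [MeasurableSingletonClass ι] {μ : Measure ι} [IsProbabilityMeasure μ] {f : ι → ℝ → ℝ}
    {h : ℝ → ℝ} (hh : IsHarmonic μ f h) (hmono : Monotone h) (hbot : Tendsto h atBot (𝓝 0))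
    (htop : Tendsto h atTop (𝓝 1)) (hcont : ∀ i, Continuous (f i))
    (hup : ∀ y, ∃ i, μ {i} ≠ 0 ∧ y < f i y) (hdown : ∀ y, ∃ i, μ {i} ≠ 0 ∧ f i y < y) (x : ℝ) :
    h x ∈ Ioo 0 1 := by
  have h_one_sub_pos := hh.one_sub.pos_of_tendsto_atBot
    (fun y => sub_nonneg.2 (hmono.ge_of_tendsto htop y)) one_ne_zero
    (by simpa using hbot.const_sub 1) hcont hdown x
  exact ⟨hh.pos_of_tendsto_atTop (hmono.le_of_tendsto hbot) one_ne_zero htop hcont hup x,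
    sub_pos.1 h_one_sub_pos⟩

section WordEvents

variable {Ω ι α : Type*} {g : ℕ → Ω → ι} {f : ι → α → α} {X : ℕ → Ω → α}

def wordEvent (g : ℕ → Ω → ι) : ℕ → List ι → Set Ω
  | _, [] => univ
  | t, i :: w => g t ⁻¹' {i} ∩ wordEvent g (t + 1) w

theorem apply_add_length_of_mem_wordEvent (hXS : ∀ n ω, X (n + 1) ω = f (g n ω) (X n ω))
    {w : List ι} {t : ℕ} {ω : Ω} (hω : ω ∈ wordEvent g t w) :
    X (t + w.length) ω = applyWord f w (X t ω) := by
  induction w generalizing t with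
  | nil => rfl
  | cons i w ih =>
    obtain ⟨hi, hω⟩ := hω
    rw [List.length_cons, ← add_assoc, add_right_comm, ih hω, applyWord_cons, hXS,
      show g t ω = i from hi]

end WordEvents

section RandomIteration

variable {Ω ι α : Type*} {mΩ : MeasurableSpace Ω} [MeasurableSpace ι] [MeasurableSpace α]
  {P : Measure Ω} {g : ℕ → Ω → ι} {μ : Measure ι} {f : ι → α → α} {X : ℕ → Ω → α} {x : α}

def pastFiltration (g : ℕ → Ω → ι) (hg : ∀ n, Measurable (g n)) : Filtration ℕ mΩ where
  seq n := ⨆ k ∈ Iio n, MeasurableSpace.comap (g k) inferInstance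
  mono' _ _ hnm := biSup_mono fun _ hk => lt_of_lt_of_le hk hnm
  le' _ := iSup₂_le fun k _ => (hg k).comap_le

theorem measurable_pastFiltration (hg : ∀ n, Measurable (g n)) {k n : ℕ} (hk : k < n) :
    Measurable[pastFiltration g hg n] (g k) :=
  measurable_iff_comap_le.2 (le_iSup₂
    (f := fun k (_ : k ∈ Iio n) => MeasurableSpace.comap (g k) inferInstance) k hk)

theorem indep_iSup_Ici_pastFiltration (hg : ∀ n, Measurable (g n)) (hindep : iIndepFun g P)
    (t : ℕ) :
    Indep (⨆ k ∈ Ici t, MeasurableSpace.comap (g k) inferInstance) (pastFiltration g hg t) P :=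
  indep_iSup_of_disjoint (fun k => (hg k).comap_le) hindep
    (disjoint_left.2 fun _ hk hk' => not_lt.2 (mem_Ici.1 hk) (mem_Iio.1 hk'))

theorem indep_comap_pastFiltration (hg : ∀ n, Measurable (g n)) (hindep : iIndepFun g P)
    (n : ℕ) : Indep (MeasurableSpace.comap (g n) inferInstance) (pastFiltration g hg n) P :=
  indep_of_indep_of_le_left (indep_iSup_Ici_pastFiltration hg hindep n)
    (le_iSup₂ (f := fun k (_ : k ∈ Ici n) => MeasurableSpace.comap (g k) inferInstance) n
      self_mem_Ici)

theorem measurable_pastFiltration_of_recursion [Countable ι] [MeasurableSingletonClass ι]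
    (hg : ∀ n, Measurable (g n)) (hf : ∀ i, Measurable (f i)) (hX0 : ∀ ω, X 0 ω = x)
    (hXS : ∀ n ω, X (n + 1) ω = f (g n ω) (X n ω)) (n : ℕ) :
    Measurable[pastFiltration g hg n] (X n) := by
  induction n with
  | zero =>
    rw [show X 0 = fun _ => x from funext hX0]
    exact measurable_const
  | succ n ih =>
    have hstep : Measurable fun p : α × ι => f p.2 p.1 :=
      measurable_from_prod_countable_left fun i => hf i
    rw [show X (n + 1) = fun ω => f (g n ω) (X n ω) from funext (hXS n)]
    exact hstep.comp ((ih.mono ((pastFiltration g hg).mono n.le_succ) le_rfl).prodMk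
      (measurable_pastFiltration hg n.lt_succ_self))

theorem measurable_of_recursion [Countable ι] [MeasurableSingletonClass ι]
    (hg : ∀ n, Measurable (g n)) (hf : ∀ i, Measurable (f i)) (hX0 : ∀ ω, X 0 ω = x)
    (hXS : ∀ n ω, X (n + 1) ω = f (g n ω) (X n ω)) (n : ℕ) : Measurable (X n) :=
  (measurable_pastFiltration_of_recursion hg hf hX0 hXS n).mono ((pastFiltration g hg).le n) le_rfl

theorem martingale_comp_of_isHarmonic [Fintype ι] [MeasurableSingletonClass ι]
    [IsFiniteMeasure P] (hg : ∀ n, Measurable (g n)) (hindep : iIndepFun g P)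
    (hlaw : ∀ n, P.map (g n) = μ) (hf : ∀ i, Measurable (f i)) (hX0 : ∀ ω, X 0 ω = x)
    (hXS : ∀ n ω, X (n + 1) ω = f (g n ω) (X n ω)) {h : α → ℝ} (hh : IsHarmonic μ f h)
    (hmeas : Measurable h) {C : ℝ} (hC : ∀ y, |h y| ≤ C) :
    Martingale (fun n ω => h (X n ω)) (pastFiltration g hg) P := by
  have hXm := measurable_pastFiltration_of_recursion hg hf hX0 hXS
  have hint : ∀ u : Ω → α, Measurable u → Integrable (fun ω => h (u ω)) P := fun u hu =>
    .of_bound (hmeas.comp hu).aestronglyMeasurable C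
      (ae_of_all _ fun ω => hC (u ω))
  refine martingale_nat (fun n => (hmeas.comp (hXm n)).stronglyMeasurable)
    (fun n => hint _ (measurable_of_recursion hg hf hX0 hXS n)) fun n => ?_
  have hdecomp : (fun ω => h (X (n + 1) ω)) =
      ∑ i, (g n ⁻¹' {i}).indicator fun ω => h (f i (X n ω)) := by
    ext ω
    rw [Finset.sum_apply, hXS, Finset.sum_eq_single (g n ω)
      (fun i _ hi => indicator_of_notMem (fun hgi => hi hgi.symm) _) (by simp)]
    exact (indicator_of_mem (s := g n ⁻¹' {g n ω}) rfl
      fun ω' => h (f (g n ω) (X n ω'))).symm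
  have hstep : ∀ i, P[(g n ⁻¹' {i}).indicator (fun ω => h (f i (X n ω))) |
      pastFiltration g hg n] =ᵐ[P] fun ω => μ.real {i} * h (f i (X n ω)) := by
    intro i
    rw [← hlaw n, map_measureReal_apply (hg n) (measurableSet_singleton i)]
    exact condExp_indicator_of_indep ((pastFiltration g hg).le n) (hg n).comap_le
      (indep_comap_pastFiltration hg hindep n)
      (hmeas.comp ((hf i).comp (hXm n))).stronglyMeasurable
      (hint _ ((hf i).comp (measurable_of_recursion hg hf hX0 hXS n)))
      ⟨{i}, measurableSet_singleton i, rfl⟩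
  have hsummand_int : ∀ i ∈ Finset.univ,
      Integrable ((g n ⁻¹' {i}).indicator fun ω => h (f i (X n ω))) P := fun i _ =>
    (hint _ ((hf i).comp (measurable_of_recursion hg hf hX0 hXS n))).indicator
      (hg n (measurableSet_singleton i))
  rw [hdecomp]
  filter_upwards [condExp_finsetSum hsummand_int _, ae_all_iff.2 hstep] with ω hsum hterm
  rw [hsum, Finset.sum_apply, hh (X n ω)]
  simp only [hterm]

theorem measurableSet_wordEvent_iSup_Ici [MeasurableSingletonClass ι] (w : List ι) (t : ℕ) :
    MeasurableSet[⨆ k ∈ Ici t, MeasurableSpace.comap (g k) inferInstance]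
      (wordEvent g t w) := by
  induction w generalizing t with
  | nil => exact @MeasurableSet.univ _ (_)
  | cons i w ih =>
    refine MeasurableSet.inter ?_ ?_
    · exact le_iSup₂ (f := fun k (_ : k ∈ Ici t) => MeasurableSpace.comap (g k) inferInstance)
        t self_mem_Ici _ ⟨{i}, measurableSet_singleton i, rfl⟩
    · have hle : (⨆ k ∈ Ici (t + 1), MeasurableSpace.comap (g k) inferInstance) ≤
          ⨆ k ∈ Ici t, MeasurableSpace.comap (g k) inferInstance :=
        biSup_mono fun k (hk : t + 1 ≤ k) => (Nat.le_of_succ_le hk : t ≤ k)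
      exact hle _ (ih (t + 1))

theorem measurableSet_wordEvent_pastFiltration [MeasurableSingletonClass ι]
    (hg : ∀ n, Measurable (g n)) (w : List ι) (t : ℕ) :
    MeasurableSet[pastFiltration g hg (t + w.length)] (wordEvent g t w) := by
  induction w generalizing t with
  | nil => exact @MeasurableSet.univ _ (_)
  | cons i w ih =>
    refine MeasurableSet.inter ?_ ?_
    · exact measurable_pastFiltration hg (by simp) (measurableSet_singleton i)
    · rw [List.length_cons, ← add_assoc, add_right_comm]
      exact ih (t + 1)

theorem measureReal_wordEvent [MeasurableSingletonClass ι] [IsProbabilityMeasure P]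
    (hg : ∀ n, Measurable (g n)) (hindep : iIndepFun g P) (hlaw : ∀ n, P.map (g n) = μ)
    (w : List ι) (t : ℕ) : P.real (wordEvent g t w) = (w.map fun i => μ.real {i}).prod := by
  induction w generalizing t with
  | nil => simp [wordEvent]
  | cons i w ih =>
    have hind := indep_iSup_of_disjoint (fun k => (hg k).comap_le) hindep
      (disjoint_singleton_left.2 (lt_irrefl t ∘ Nat.lt_of_succ_le) :
        Disjoint {t} (Ici (t + 1)))
    rw [iSup_singleton] at hind
    have hinter := (Indep_iff _ _ _).1 hind _ _ ⟨{i}, measurableSet_singleton i, rfl⟩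
      (measurableSet_wordEvent_iSup_Ici w (t + 1))
    have hlaw_i : P.real (g t ⁻¹' {i}) = μ.real {i} := by
      rw [← hlaw t, map_measureReal_apply (hg t) (measurableSet_singleton i)]
    rw [wordEvent, measureReal_def, hinter, ENNReal.toReal_mul, ← measureReal_def,
      ← measureReal_def, ih, hlaw_i, List.map_cons, List.prod_cons]

theorem ae_frequently_mem_image_applyWord_of_mul_add [MeasurableSingletonClass ι]
    [Countable ι] [IsProbabilityMeasure P] [IsFiniteMeasure μ] (hg : ∀ n, Measurable (g n))
    (hindep : iIndepFun g P) (hlaw : ∀ n, P.map (g n) = μ) (hf : ∀ i, Measurable (f i))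
    (hX0 : ∀ ω, X 0 ω = x) (hXS : ∀ n ω, X (n + 1) ω = f (g n ω) (X n ω)) {w : List ι}
    (hw : ∀ i ∈ w, μ {i} ≠ 0) {s : Set α} (hs : MeasurableSet s) (r : ℕ) :
    ∀ᵐ ω ∂P, (∃ᶠ k in atTop, X (k * w.length + r) ω ∈ s) →
      ∃ᶠ k in atTop, X (k * w.length + r + w.length) ω ∈ applyWord f w '' s := by
  set m := w.length
  -- After each visit at a time `k * m + r`, the next block of letters spells `w` with
  -- probability `δ`, independently of the past.
  let ℋ : Filtration ℕ mΩ :=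
    { seq := fun k => pastFiltration g hg (k * m + r)
      mono' := fun _ _ hkl => (pastFiltration g hg).mono (by gcongr)
      le' := fun _ => (pastFiltration g hg).le _ }
  have hX := measurable_pastFiltration_of_recursion hg hf hX0 hXS
  have hB : ∀ k, MeasurableSet[ℋ k] (X (k * m + r) ⁻¹' s) := fun k => hX _ hs
  have hA : ∀ k, MeasurableSet[ℋ (k + 1)]
      (X (k * m + r) ⁻¹' s ∩ wordEvent g (k * m + r) w) := by
    intro k
    change MeasurableSet[pastFiltration g hg ((k + 1) * m + r)] _
    rw [show (k + 1) * m + r = k * m + r + m by ring]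
    exact ((pastFiltration g hg).mono (Nat.le_add_right _ _) _ (hB k)).inter
      (measurableSet_wordEvent_pastFiltration hg w _)
  have hcond : ∀ k, P[(X (k * m + r) ⁻¹' s ∩ wordEvent g (k * m + r) w).indicator 1 | ℋ k]
      =ᵐ[P] fun ω =>
        (X (k * m + r) ⁻¹' s).indicator 1 ω * (w.map fun i => μ.real {i}).prod := by
    intro k
    rw [inter_comm, ← indicator_indicator]
    have := condExp_indicator_of_indep (ℋ.le k) (iSup₂_le fun k _ => (hg k).comap_le)
      (indep_iSup_Ici_pastFiltration hg hindep _)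
      ((stronglyMeasurable_one (β := ℝ)).indicator (hB k))
      ((integrable_const 1).indicator ((ℋ.le k) _ (hB k)))
      (measurableSet_wordEvent_iSup_Ici w (k * m + r))
    simpa only [measureReal_wordEvent hg hindep hlaw, mul_comm] using this
  have hδ : 0 < (w.map fun i => μ.real {i}).prod := List.prod_pos fun _ ha => by
    obtain ⟨i, hi, rfl⟩ := List.mem_map.1 ha
    exact ENNReal.toReal_pos (hw i hi) (measure_ne_top μ {i})
  filter_upwards [ae_frequently_of_condExp_indicator_eq hδ hA hcond] with ω hω hfreq
  exact (hω hfreq).mono fun k ⟨hks, hkw⟩ =>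
    ⟨_, hks, (apply_add_length_of_mem_wordEvent hXS hkw).symm⟩

theorem ae_frequently_mem_image_applyWord [MeasurableSingletonClass ι] [Countable ι]
    [IsProbabilityMeasure P] [IsFiniteMeasure μ] (hg : ∀ n, Measurable (g n))
    (hindep : iIndepFun g P) (hlaw : ∀ n, P.map (g n) = μ) (hf : ∀ i, Measurable (f i))
    (hX0 : ∀ ω, X 0 ω = x) (hXS : ∀ n ω, X (n + 1) ω = f (g n ω) (X n ω)) {w : List ι}
    (hne : w ≠ []) (hw : ∀ i ∈ w, μ {i} ≠ 0) {s : Set α} (hs : MeasurableSet s) :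
    ∀ᵐ ω ∂P, (∃ᶠ n in atTop, X n ω ∈ s) → ∃ᶠ n in atTop, X n ω ∈ applyWord f w '' s := by
  have hm : 0 < w.length := List.length_pos_iff.2 hne
  filter_upwards [ae_all_iff.2 fun r => ae_frequently_mem_image_applyWord_of_mul_add hg hindep
    hlaw hf hX0 hXS hw hs r] with ω hω hfreq
  obtain ⟨r, -, hr⟩ := exists_frequently_mul_add hm hfreq
  refine (tendsto_atTop_atTop.2 fun N => ⟨N, fun k hk => ?_⟩).frequently (hω r hr)
  nlinarith

end RandomIteration

section Escape

variable {Ω ι : Type*} {mΩ : MeasurableSpace Ω} [MeasurableSpace ι] {P : Measure Ω}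
  [IsProbabilityMeasure P] {X : ℕ → Ω → ℝ}

theorem ae_tendsto_atTop_or_atBot [Fintype ι] [MeasurableSingletonClass ι]
    {g : ℕ → Ω → ι} {μ : Measure ι} [IsFiniteMeasure μ] {f : ι → ℝ → ℝ} {x : ℝ}
    (hg : ∀ n, Measurable (g n)) (hindep : iIndepFun g P) (hlaw : ∀ n, P.map (g n) = μ)
    (hmono_f : ∀ i, Monotone (f i)) (hcont : ∀ i, Continuous (f i))
    (hup : ∀ y, ∃ i, μ {i} ≠ 0 ∧ y < f i y) (hdown : ∀ y, ∃ i, μ {i} ≠ 0 ∧ f i y < y)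
    (hX0 : ∀ ω, X 0 ω = x) (hXS : ∀ n ω, X (n + 1) ω = f (g n ω) (X n ω)) {h : ℝ → ℝ}
    (hh : IsHarmonic μ f h) (hmono : Monotone h) (hbot : Tendsto h atBot (𝓝 0))
    (htop : Tendsto h atTop (𝓝 1)) :
    ∀ᵐ ω ∂P, Tendsto (X · ω) atTop atTop ∨ Tendsto (X · ω) atTop atBot := by
  have hmeas_f : ∀ i, Measurable (f i) := fun i => (hcont i).measurable
  obtain ⟨a, ha⟩ := (hbot.eventually (gt_mem_nhds one_half_pos)).exists
  obtain ⟨b, hb⟩ := (htop.eventually (lt_mem_nhds one_half_lt_one)).exists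
  have hbdd := hmono.abs_le_one_of_tendsto hbot htop
  have hconv : ∀ᵐ ω ∂P, ∃ c, Tendsto (fun n => h (X n ω)) atTop (𝓝 c) := by
    have hmart := martingale_comp_of_isHarmonic hg hindep hlaw hmeas_f hX0 hXS hh
      hmono.measurable hbdd
    filter_upwards [hmart.submartingale.ae_tendsto_limitProcess (R := 1) fun n =>
      (eLpNorm_le_of_ae_bound (ae_of_all _ fun ω => hbdd (X n ω))).trans (by simp)]
      with ω hω using ⟨_, hω⟩
  choose wdn hwdn_ne hwdn_mem hwdn_lt using fun N : ℕ =>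
    exists_applyWord_lt (L := {i | μ {i} ≠ 0}) (fun i _ => hcont i) hdown (N : ℝ) a
  choose wup hwup_ne hwup_mem hwup_lt using fun N : ℕ =>
    exists_lt_applyWord (L := {i | μ {i} ≠ 0}) (fun i _ => hcont i) hup (-N : ℝ) b
  have hvisit : ∀ᵐ ω ∂P, ∀ N : ℕ, (∃ᶠ n in atTop, X n ω ∈ Icc (-N : ℝ) N) →
      (∃ᶠ n in atTop, X n ω ≤ a) ∧ ∃ᶠ n in atTop, b ≤ X n ω := by
    refine ae_all_iff.2 fun N => ?_
    filter_upwards [ae_frequently_mem_image_applyWord hg hindep hlaw hmeas_f hX0 hXS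
        (hwdn_ne N) (hwdn_mem N) measurableSet_Icc,
      ae_frequently_mem_image_applyWord hg hindep hlaw hmeas_f hX0 hXS
        (hwup_ne N) (hwup_mem N) measurableSet_Icc] with ω hdn hup hN
    refine ⟨(hdn hN).mono ?_, (hup hN).mono ?_⟩
    · rintro n ⟨y, hy, hyn⟩
      exact hyn ▸ (monotone_applyWord hmono_f _ hy.2).trans (hwdn_lt N).le
    · rintro n ⟨y, hy, hyn⟩
      exact hyn ▸ (hwup_lt N).le.trans (monotone_applyWord hmono_f _ hy.1)
  filter_upwards [hconv, hvisit] with ω ⟨c, hc⟩ hv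
  exact tendsto_atTop_or_atBot_of_frequently hmono (ha.trans hb) hc hv

theorem measureReal_tendsto_atBot_eq_one_sub (hX : ∀ n, Measurable (X n))
    (hdich : ∀ᵐ ω ∂P, Tendsto (X · ω) atTop atTop ∨ Tendsto (X · ω) atTop atBot) :
    P.real {ω | Tendsto (X · ω) atTop atBot} =
      1 - P.real {ω | Tendsto (X · ω) atTop atTop} := by
  have hae : {ω | Tendsto (X · ω) atTop atBot} =ᵐ[P]
      ({ω | Tendsto (X · ω) atTop atTop}ᶜ : Set Ω) := by
    filter_upwards [hdich] with ω hω
    exact propext ⟨fun hbot htop => htop.not_tendsto disjoint_atTop_atBot hbot,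
      hω.resolve_left⟩
  rw [measureReal_congr hae, measureReal_compl (measurableSet_tendsto atTop hX),
    probReal_univ]

theorem measureReal_tendsto_atTop_eq_of_isHarmonic [Fintype ι] [MeasurableSingletonClass ι]
    {g : ℕ → Ω → ι} {μ : Measure ι} {f : ι → ℝ → ℝ} {x : ℝ} (hg : ∀ n, Measurable (g n))
    (hindep : iIndepFun g P) (hlaw : ∀ n, P.map (g n) = μ) (hf : ∀ i, Measurable (f i))
    (hX0 : ∀ ω, X 0 ω = x) (hXS : ∀ n ω, X (n + 1) ω = f (g n ω) (X n ω)) {h : ℝ → ℝ}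
    (hh : IsHarmonic μ f h) (hmono : Monotone h) (hbot : Tendsto h atBot (𝓝 0))
    (htop : Tendsto h atTop (𝓝 1))
    (hdich : ∀ᵐ ω ∂P, Tendsto (X · ω) atTop atTop ∨ Tendsto (X · ω) atTop atBot) :
    P.real {ω | Tendsto (X · ω) atTop atTop} = h x := by
  set T := {ω | Tendsto (X · ω) atTop atTop}
  have hX := measurable_of_recursion hg hf hX0 hXS
  have hbdd := hmono.abs_le_one_of_tendsto hbot htop
  have hmart :=
    martingale_comp_of_isHarmonic hg hindep hlaw hf hX0 hXS hh hmono.measurable hbdd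
  have hmean : ∀ n, ∫ ω, h (X n ω) ∂P = h x := fun n => by
    simpa [hX0] using (hmart.setIntegral_eq (Nat.zero_le n) MeasurableSet.univ).symm
  have hlim : ∀ᵐ ω ∂P, Tendsto (fun n => h (X n ω)) atTop (𝓝 (T.indicator 1 ω)) := by
    filter_upwards [hdich] with ω hω
    by_cases hωT : ω ∈ T
    · simpa [hωT, Function.comp_def] using htop.comp hωT
    · simpa [hωT, Function.comp_def] using hbot.comp (hω.resolve_left hωT)
  have hconv := tendsto_integral_of_dominated_convergence (fun _ => (1 : ℝ))
    (fun n => (hmono.measurable.comp (hX n)).aestronglyMeasurable) (integrable_const 1)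
    (fun n => ae_of_all _ fun ω => hbdd (X n ω)) hlim
  have hT : MeasurableSet T := measurableSet_tendsto atTop hX
  simp only [Function.comp_apply, hmean, integral_indicator_one hT] at hconv
  exact (tendsto_nhds_unique tendsto_const_nhds hconv).symm

theorem measureReal_tendsto_eq_of_isHarmonic [Fintype ι] [MeasurableSingletonClass ι]
    {g : ℕ → Ω → ι} {μ : Measure ι} [IsFiniteMeasure μ] {f : ι → ℝ → ℝ} {x : ℝ}
    (hg : ∀ n, Measurable (g n)) (hindep : iIndepFun g P) (hlaw : ∀ n, P.map (g n) = μ)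
    (hmono_f : ∀ i, Monotone (f i)) (hcont : ∀ i, Continuous (f i))
    (hup : ∀ y, ∃ i, μ {i} ≠ 0 ∧ y < f i y) (hdown : ∀ y, ∃ i, μ {i} ≠ 0 ∧ f i y < y)
    (hX0 : ∀ ω, X 0 ω = x) (hXS : ∀ n ω, X (n + 1) ω = f (g n ω) (X n ω)) {h : ℝ → ℝ}
    (hh : IsHarmonic μ f h) (hmono : Monotone h) (hbot : Tendsto h atBot (𝓝 0))
    (htop : Tendsto h atTop (𝓝 1)) :
    P.real {ω | Tendsto (X · ω) atTop atTop} = h x ∧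
      P.real {ω | Tendsto (X · ω) atTop atBot} = 1 - h x := by
  have hmeas_f : ∀ i, Measurable (f i) := fun i => (hcont i).measurable
  have hdich := ae_tendsto_atTop_or_atBot hg hindep hlaw hmono_f hcont hup hdown hX0 hXS hh
    hmono hbot htop
  have hφ := measureReal_tendsto_atTop_eq_of_isHarmonic hg hindep hlaw hmeas_f hX0 hXS hh
    hmono hbot htop hdich
  exact ⟨hφ, hφ ▸ measureReal_tendsto_atBot_eq_one_sub
    (measurable_of_recursion hg hmeas_f hX0 hXS) hdich⟩

end Escape

/-- under shiftability, if there is a probability stationary measure for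
the inverse dynamics, then for the forward dynamics φ₊ and φ₋ are positive everywhere,
and the CDF of the stationary measure coincides with φ₊ at its continuity points. -/
theorem rds_inverse_probability_stationary_measure
    {Ω : Type*} [MeasurableSpace Ω] (P : Measure Ω) [IsProbabilityMeasure P]
    {ι : Type*} [Fintype ι] [MeasurableSpace ι] [MeasurableSingletonClass ι]
    (f : ι → ℝ → ℝ)
    (hf : ∀ i, StrictMono (f i) ∧ Function.Bijective (f i))
    (g : ℕ → Ω → ι) (hgmeas : ∀ n, Measurable (g n))
    (hindep : iIndepFun g P)
    (μ : Measure ι) [IsProbabilityMeasure μ] (hlaw : ∀ n, Measure.map (g n) P = μ)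
    (F : ℕ → Ω → ℝ → ℝ)
    (hF0 : ∀ ω x, F 0 ω x = x)
    (hFS : ∀ n ω x, F (n + 1) ω x = f (g n ω) (F n ω x))
    (hshift : ∀ x : ℝ, 0 < μ {i | f i x < x} ∧ 0 < μ {i | x < f i x})
    (ν : Measure ℝ) [IsProbabilityMeasure ν]
    (hstat : ∀ A : Set ℝ, MeasurableSet A → ν A = ∑ i, μ {i} * ν (f i '' A)) :
    (∀ x : ℝ, 0 < P {ω | Tendsto (fun n => F n ω x) atTop atTop} ∧
      0 < P {ω | Tendsto (fun n => F n ω x) atTop atBot}) ∧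
    (∀ x : ℝ, ContinuousAt (fun t : ℝ => (ν (Set.Iic t)).toReal) x →
      ν (Set.Iic x) = P {ω | Tendsto (fun n => F n ω x) atTop atTop}) := by
  have hcont : ∀ i, Continuous (f i) := fun i =>
    (hf i).1.monotone.continuous_of_surjective (hf i).2.2
  have hdown : ∀ y, ∃ i, μ {i} ≠ 0 ∧ f i y < y := fun y =>
    (exists_mem_measure_singleton_ne_zero (hshift y).1.ne').imp fun _ h => h.symm
  have hup : ∀ y, ∃ i, μ {i} ≠ 0 ∧ y < f i y := fun y =>
    (exists_mem_measure_singleton_ne_zero (hshift y).2.ne').imp fun _ h => h.symm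
  have hh := isHarmonic_cdf (fun i => (hf i).1) (fun i => (hf i).2.2) hstat
  have hcdf := hh.mem_Ioo (monotone_cdf ν) (tendsto_cdf_atBot ν) (tendsto_cdf_atTop ν) hcont hup
    hdown
  have hφ := fun x => measureReal_tendsto_eq_of_isHarmonic (X := fun n ω => F n ω x) hgmeas
    hindep hlaw (fun i => (hf i).1.monotone) hcont hup hdown (fun ω => hF0 ω x)
    (fun n ω => hFS n ω x) hh (monotone_cdf ν) (tendsto_cdf_atBot ν) (tendsto_cdf_atTop ν)
  refine ⟨fun x => ⟨?_, ?_⟩, fun x _ => ?_⟩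
  · exact pos_iff_ne_zero.2 ((measureReal_ne_zero_iff).1 ((hφ x).1 ▸ (hcdf x).1.ne'))
  · exact pos_iff_ne_zero.2 ((measureReal_ne_zero_iff).1 ((hφ x).2 ▸ (sub_pos.2 (hcdf x).2).ne'))
  · rw [← ofReal_cdf, ← (hφ x).1, ofReal_measureReal]
end

section
/- Let an RDS on ℝ be generated by a finitely supported measure μ on Homeo⁺(ℝ) with shiftability, and suppose there is a compact interval J such that from every starting point the random orbit almost surely visits J infinitely often (recurrence). Then there exists a nonzero Radon stationary measure for the RDS. -/
/-!
Let `σ_N = ∑_{n<N} law(F_n(a))` be the expected occupation measures of the orbit of `a`, and let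
`m_N = σ_N(U)` for an open neighbourhood `U` of `[a, b]`. Recurrence gives `m_N → ∞`
(Borel–Cantelli). By compactness, recurrence also gives, uniformly for `y` in a compact set `K`,
a probability `≥ q > 0` that the orbit of `y` enters `U` within `M` steps. By the Markov property
this yields `q σ_N(K) ≤ M σ_{N+M}(U) ≤ M (m_N + M)`. Also `σ_N` is stationary up to an error of
total mass one: `∑ᵢ pᵢ σ_N(fᵢ⁻¹ B) - σ_N(B) = law(F_N(a))(B) - δ_a(B)`. So the measures
`σ_N / m_N` are locally bounded and asymptotically stationary. A limit of their distribution
functions along an ultrafilter is a monotone function, and its Stieltjes measure is stationary,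
Radon, and gives mass `≥ 1` near `U`.
-/

open MeasureTheory ProbabilityTheory Filter Set Topology
open scoped ENNReal
open Function (rightLim)

lemma exists_tendsto_hyperfilter_of_eventually_abs_le {x : ℕ → ℝ} {C : ℝ}
    (h : ∀ᶠ N in atTop, |x N| ≤ C) : ∃ l, Tendsto x (hyperfilter ℕ) (𝓝 l) := by
  have hmem : Icc (-C) C ∈ (hyperfilter ℕ : Filter ℕ).map x :=
    Nat.hyperfilter_le_atTop (h.mono fun N hN => abs_le.1 hN)
  obtain ⟨l, -, hl⟩ := isCompact_Icc.ultrafilter_le_nhds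
    (Ultrafilter.map x (hyperfilter ℕ)) (le_principal_iff.2 hmem)
  exact ⟨l, hl⟩

lemma measureReal_Iic_sub_Iic {α : Type*} [TopologicalSpace α] [LinearOrder α]
    [OrderClosedTopology α] [MeasurableSpace α] [OpensMeasurableSpace α] {μ : Measure α}
    [IsFiniteMeasure μ] {s t : α} (hst : s ≤ t) :
    μ.real (Iic t) - μ.real (Iic s) = μ.real (Ioc s t) := by
  rw [← Iic_union_Ioc_eq_Iic hst, measureReal_union (Iic_disjoint_Ioc le_rfl) measurableSet_Ioc]
  ring

lemma OrderIso.tendsto_nhdsGT {α β : Type*} [TopologicalSpace α] [LinearOrder α]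
    [OrderTopology α] [TopologicalSpace β] [LinearOrder β] [OrderTopology β] (e : α ≃o β) (t : α) :
    Tendsto e (𝓝[>] t) (𝓝[>] (e t)) :=
  e.continuous.continuousWithinAt.tendsto_nhdsWithin fun _ hx => e.strictMono hx

section Stationary

variable {ι : Type*} [Fintype ι]

lemma Monotone.rightLim_sub_eq_sum {G : ℝ → ℝ} (hG : Monotone G) (w : ι → ℝ) (φ : ι → ℝ ≃o ℝ)
    (hstat : ∀ s t, G t - G s = ∑ i, w i * (G ((φ i).symm t) - G ((φ i).symm s))) (s t : ℝ) :
    rightLim G t - rightLim G s =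
      ∑ i, w i * (rightLim G ((φ i).symm t) - rightLim G ((φ i).symm s)) := by
  -- `G - ∑ wᵢ G ∘ φᵢ⁻¹` is constant, and its right limits are computed termwise
  set D : ℝ → ℝ := fun x => G x - ∑ i, w i * G ((φ i).symm x)
  have hD : ∀ x, D x = D 0 := fun x => by
    have h := hstat 0 x
    simp only [mul_sub, Finset.sum_sub_distrib] at h
    simp only [D]
    linarith
  have hlim : ∀ x, rightLim G x - ∑ i, w i * rightLim G ((φ i).symm x) = D 0 := fun x => by
    have : Tendsto D (𝓝[>] x) (𝓝 (rightLim G x - ∑ i, w i * rightLim G ((φ i).symm x))) :=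
      (hG.tendsto_rightLim x).sub (tendsto_finsetSum _ fun i _ =>
        ((hG.tendsto_rightLim _).comp ((φ i).symm.tendsto_nhdsGT x)).const_mul (w i))
    exact tendsto_nhds_unique this (tendsto_const_nhds.congr fun y => (hD y).symm)
  have hs := hlim s
  have ht := hlim t
  simp only [mul_sub, Finset.sum_sub_distrib]
  linarith

lemma Monotone.stieltjesFunction_measure_eq_sum {G : ℝ → ℝ} (hG : Monotone G) (w : ι → ℝ≥0∞)
    (hw : ∀ i, w i ≠ ∞) (φ : ι → ℝ ≃o ℝ)
    (hstat : ∀ s t, G t - G s = ∑ i, (w i).toReal * (G ((φ i).symm t) - G ((φ i).symm s)))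
    {A : Set ℝ} (hA : MeasurableSet A) :
    hG.stieltjesFunction.measure A = ∑ i, w i * hG.stieltjesFunction.measure (φ i ⁻¹' A) := by
  set ν := hG.stieltjesFunction.measure
  have hsum : ∀ B, MeasurableSet B → (∑ i, w i • ν.map (φ i)) B = ∑ i, w i * ν (φ i ⁻¹' B) :=
    fun B hB => by
      simp only [Measure.finsetSum_apply, Measure.smul_apply, smul_eq_mul,
        Measure.map_apply (φ _).continuous.measurable hB]
  have hν : ν = ∑ i, w i • ν.map (φ i) := by
    refine Measure.ext_of_Ioc _ _ fun s t _ => ?_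
    have hmono : ∀ i, rightLim G ((φ i).symm s) ≤ rightLim G ((φ i).symm t) :=
      fun i => hG.rightLim ((φ i).symm.monotone (by linarith))
    rw [hsum _ measurableSet_Ioc, StieltjesFunction.measure_Ioc, hG.stieltjesFunction_eq,
      hG.stieltjesFunction_eq, hG.rightLim_sub_eq_sum _ φ hstat,
      ENNReal.ofReal_sum_of_nonneg fun i _ => mul_nonneg ENNReal.toReal_nonneg
        (sub_nonneg.2 (hmono i))]
    refine Finset.sum_congr rfl fun i _ => ?_
    rw [ENNReal.ofReal_mul ENNReal.toReal_nonneg, ENNReal.ofReal_toReal (hw i),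
      (φ i).preimage_Ioc, StieltjesFunction.measure_Ioc, hG.stieltjesFunction_eq,
      hG.stieltjesFunction_eq]
  rw [← hsum A hA, ← hν]

lemma exists_monotone_tendsto_hyperfilter_measureReal_Ioc_div (σ : ℕ → Measure ℝ)
    [∀ N, IsFiniteMeasure (σ N)] {m : ℕ → ℝ} (hm : ∀ᶠ N in atTop, 0 < m N)
    (hbdd : ∀ s t, ∃ K, ∀ᶠ N in atTop, (σ N).real (Ioc s t) ≤ K * m N) :
    ∃ G : ℝ → ℝ, Monotone G ∧ ∀ s t, s ≤ t →
      Tendsto (fun N => (σ N).real (Ioc s t) / m N) (hyperfilter ℕ) (𝓝 (G t - G s)) := by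
  set Gₙ : ℕ → ℝ → ℝ := fun N t => ((σ N).real (Iic t) - (σ N).real (Iic 0)) / m N
  have hdiff : ∀ N s t, s ≤ t → Gₙ N t - Gₙ N s = (σ N).real (Ioc s t) / m N :=
    fun N s t hst => by
      rw [← measureReal_Iic_sub_Iic hst, ← sub_div]
      ring_nf
  have hratio : ∀ s t, ∃ K, ∀ᶠ N in atTop, (σ N).real (Ioc s t) / m N ∈ Icc 0 K := fun s t => by
    obtain ⟨K, hK⟩ := hbdd s t
    refine ⟨K, (hK.and hm).mono fun N ⟨hN, hmN⟩ => ⟨by positivity, ?_⟩⟩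
    rwa [div_le_iff₀ hmN]
  have hGₙ : ∀ t, ∃ K, ∀ᶠ N in atTop, |Gₙ N t| ≤ K := fun t => by
    have h0 : ∀ N, Gₙ N 0 = 0 := fun N => by simp [Gₙ]
    rcases le_total 0 t with ht | ht
    · obtain ⟨K, hK⟩ := hratio 0 t
      refine ⟨K, hK.mono fun N hN => ?_⟩
      rw [← sub_zero (Gₙ N t), ← h0 N, hdiff N 0 t ht, abs_of_nonneg hN.1]
      exact hN.2
    · obtain ⟨K, hK⟩ := hratio t 0
      refine ⟨K, hK.mono fun N hN => ?_⟩
      rw [← abs_neg, ← zero_sub, ← h0 N, hdiff N t 0 ht, abs_of_nonneg hN.1]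
      exact hN.2
  choose G hG using fun t =>
    (hGₙ t).elim fun _ hK => exists_tendsto_hyperfilter_of_eventually_abs_le hK
  have hGdiff : ∀ s t, s ≤ t →
      Tendsto (fun N => (σ N).real (Ioc s t) / m N) (hyperfilter ℕ) (𝓝 (G t - G s)) :=
    fun s t hst => ((hG t).sub (hG s)).congr fun N => hdiff N s t hst
  refine ⟨G, fun s t hst => ?_, hGdiff⟩
  obtain ⟨K, hK⟩ := hratio s t
  exact sub_nonneg.1 (ge_of_tendsto (hGdiff s t hst)
    (Nat.hyperfilter_le_atTop (hK.mono fun N hN => hN.1)))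

lemma Monotone.stieltjesFunction_measure_ne_zero {G : ℝ → ℝ} (hG : Monotone G) {s t : ℝ}
    (hst : G s < G t) : hG.stieltjesFunction.measure ≠ 0 := by
  intro h0
  have hν : hG.stieltjesFunction.measure (Ioc (s - 1) t) = 0 := by rw [h0]; rfl
  rw [StieltjesFunction.measure_Ioc, ENNReal.ofReal_eq_zero, hG.stieltjesFunction_eq,
    hG.stieltjesFunction_eq] at hν
  linarith [hG.le_rightLim (le_refl t), hG.rightLim_le (show s - 1 < s by linarith)]

theorem exists_stationary_measure_of_almost_stationary (w : ι → ℝ≥0∞) (hw : ∀ i, w i ≠ ∞)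
    (φ : ι → ℝ ≃o ℝ) (σ : ℕ → Measure ℝ) [∀ N, IsFiniteMeasure (σ N)] (m : ℕ → ℝ) (C : ℝ)
    (hm : Tendsto m atTop atTop)
    (hbdd : ∀ s t, ∃ K, ∀ᶠ N in atTop, (σ N).real (Ioc s t) ≤ K * m N)
    (hdefect : ∀ s t N,
      |(σ N).real (Ioc s t) - ∑ i, (w i).toReal * (σ N).real (φ i ⁻¹' Ioc s t)| ≤ C)
    {s₀ t₀ : ℝ} (hpos : ∀ᶠ N in atTop, m N ≤ (σ N).real (Ioc s₀ t₀)) :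
    ∃ ν : Measure ℝ, ν ≠ 0 ∧ IsLocallyFiniteMeasure ν ∧
      ∀ A, MeasurableSet A → ν A = ∑ i, w i * ν (φ i ⁻¹' A) := by
  have hmpos : ∀ᶠ N in atTop, 0 < m N := hm.eventually_gt_atTop 0
  obtain ⟨G, hGmono, hG⟩ := exists_monotone_tendsto_hyperfilter_measureReal_Ioc_div σ hmpos hbdd
  have hstat_le : ∀ s t, s ≤ t →
      G t - G s = ∑ i, (w i).toReal * (G ((φ i).symm t) - G ((φ i).symm s)) := fun s t hst => by
    set defect : ℕ → ℝ := fun N =>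
      (σ N).real (Ioc s t) - ∑ i, (w i).toReal * (σ N).real (φ i ⁻¹' Ioc s t)
    have hlim : Tendsto (fun N => defect N / m N) (hyperfilter ℕ)
        (𝓝 ((G t - G s) - ∑ i, (w i).toReal * (G ((φ i).symm t) - G ((φ i).symm s)))) := by
      refine ((hG s t hst).sub (tendsto_finsetSum _ fun i _ =>
        (hG _ _ ((φ i).symm.monotone hst)).const_mul _)).congr fun N => ?_
      simp only [defect, (φ _).preimage_Ioc, sub_div, Finset.sum_div, mul_div_assoc]
    have hzero : Tendsto (fun N => defect N / m N) atTop (𝓝 0) := by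
      refine squeeze_zero_norm' (hmpos.mono fun N hN => ?_)
        ((tendsto_const_nhds (x := C)).div_atTop hm)
      rw [Real.norm_eq_abs, abs_div, abs_of_pos hN]
      exact div_le_div_of_nonneg_right (hdefect s t N) hN.le
    exact sub_eq_zero.1 (tendsto_nhds_unique hlim (hzero.mono_left Nat.hyperfilter_le_atTop))
  have hstat : ∀ s t,
      G t - G s = ∑ i, (w i).toReal * (G ((φ i).symm t) - G ((φ i).symm s)) := fun s t => by
    rcases le_total s t with hst | hts
    · exact hstat_le s t hst
    · rw [← neg_sub, hstat_le t s hts, ← Finset.sum_neg_distrib]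
      simp only [← mul_neg, neg_sub]
  have hst₀ : s₀ < t₀ := by
    obtain ⟨N, hN, hmN⟩ := (hpos.and hmpos).exists
    by_contra! h
    rw [Ioc_eq_empty (not_lt.2 h), measureReal_empty] at hN
    linarith
  have hG₀ : 1 ≤ G t₀ - G s₀ := ge_of_tendsto (hG s₀ t₀ hst₀.le) (Nat.hyperfilter_le_atTop
    ((hpos.and hmpos).mono fun N ⟨h, hmN⟩ => by rwa [le_div_iff₀ hmN, one_mul]))
  exact ⟨_, hGmono.stieltjesFunction_measure_ne_zero (s := s₀) (t := t₀) (by linarith),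
    inferInstance, fun A hA => hGmono.stieltjesFunction_measure_eq_sum w hw φ hstat hA⟩

end Stationary

section WordAction

variable {ι : Type*}

def wordAct (f : ι → ℝ → ℝ) (v : ℕ → ι) : ℕ → ℝ → ℝ
  | 0, x => x
  | n + 1, x => f (v n) (wordAct f v n x)

lemma measurable_wordAct [MeasurableSpace ι] [Countable ι] [MeasurableSingletonClass ι]
    {f : ι → ℝ → ℝ} (hf : ∀ i, Measurable (f i)) (n : ℕ) :
    Measurable fun p : ℝ × (ℕ → ι) => wordAct f p.2 n p.1 := by
  induction n with
  | zero => exact measurable_fst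
  | succ n ih =>
    exact (measurable_from_prod_countable_left (f := fun q : ℝ × ι => f q.2 q.1) hf).comp
      (ih.prodMk ((measurable_pi_apply n).comp measurable_snd))

lemma continuous_wordAct {f : ι → ℝ → ℝ} (hf : ∀ i, Continuous (f i)) (v : ℕ → ι) (n : ℕ) :
    Continuous (wordAct f v n) := by
  induction n with
  | zero => exact continuous_id
  | succ n ih => exact (hf (v n)).comp ih

end WordAction

structure IsRandomDynamicalSystem {ι Ω : Type*} [MeasurableSpace Ω] [MeasurableSpace ι]
    (P : Measure Ω) (μ : Measure ι) (f : ι → ℝ → ℝ) (g : ℕ → Ω → ι) (F : ℕ → Ω → ℝ → ℝ) :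
    Prop where
  measurable_letter : ∀ n, Measurable (g n)
  iIndepFun_letter : iIndepFun g P
  map_letter : ∀ n, P.map (g n) = μ
  zero : ∀ ω x, F 0 ω x = x
  succ : ∀ n ω x, F (n + 1) ω x = f (g n ω) (F n ω x)

namespace IsRandomDynamicalSystem

variable {ι Ω : Type*} [MeasurableSpace Ω] {P : Measure Ω} [MeasurableSpace ι] {μ : Measure ι}
  {f : ι → ℝ → ℝ} {g : ℕ → Ω → ι} {F : ℕ → Ω → ℝ → ℝ}

lemma add_eq_wordAct (h : IsRandomDynamicalSystem P μ f g F) (n j : ℕ) (ω : Ω) (x : ℝ) :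
    F (n + j) ω x = wordAct f (fun k => g (n + k) ω) j (F n ω x) := by
  induction j with
  | zero => rfl
  | succ j ih => rw [← add_assoc, h.succ, ih]; rfl

lemma eq_wordAct (h : IsRandomDynamicalSystem P μ f g F) (n : ℕ) (ω : Ω) (x : ℝ) :
    F n ω x = wordAct f (fun k => g k ω) n x := by
  simpa [h.zero] using h.add_eq_wordAct 0 n ω x

protected lemma isProbabilityMeasure [IsProbabilityMeasure P]
    (h : IsRandomDynamicalSystem P μ f g F) : IsProbabilityMeasure μ :=
  h.map_letter 0 ▸ Measure.isProbabilityMeasure_map (h.measurable_letter 0).aemeasurable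

lemma map_future [IsProbabilityMeasure P] (h : IsRandomDynamicalSystem P μ f g F) (n : ℕ) :
    P.map (fun ω k => g (n + k) ω) = Measure.infinitePi fun _ => μ := by
  rw [(h.iIndepFun_letter.precomp (add_right_injective n)).map_fun_eq_infinitePi_map
    fun k => h.measurable_letter _]
  simp only [h.map_letter]

lemma exists_forall_le_hitting [IsProbabilityMeasure P] (h : IsRandomDynamicalSystem P μ f g F)
    (hf : ∀ i, Continuous (f i)) {A U : Set ℝ} (hAU : A ⊆ U) (hU : IsOpen U)
    (hrec : ∀ x, P {ω | ∃ᶠ n in atTop, F n ω x ∈ A} = 1) {K : Set ℝ} (hK : IsCompact K) :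
    ∃ M, ∃ q ≠ 0, q ≤ 1 ∧ ∀ y ∈ K, q ≤ P {ω | ∃ j ∈ Finset.Icc 1 M, F j ω y ∈ U} := by
  have hmono : ∀ {M M'} y, M ≤ M' → P {ω | ∃ j ∈ Finset.Icc 1 M, F j ω y ∈ U} ≤
      P {ω | ∃ j ∈ Finset.Icc 1 M', F j ω y ∈ U} := fun y hM => measure_mono
    fun ω ⟨j, hj, hjU⟩ => ⟨j, Finset.Icc_subset_Icc le_rfl hM hj, hjU⟩
  refine hK.induction_on ⟨0, 1, one_ne_zero, le_rfl, by simp⟩ ?_ ?_ ?_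
  · exact fun s t hst ⟨M, q, hq0, hq1, hq⟩ => ⟨M, q, hq0, hq1, fun y hy => hq y (hst hy)⟩
  · rintro s t ⟨M, q, hq0, hq1, hq⟩ ⟨M', q', hq0', hq1', hq'⟩
    refine ⟨max M M', min q q', by simp [hq0, hq0'], min_le_of_left_le hq1, ?_⟩
    rintro y (hy | hy)
    · exact (min_le_left _ _).trans ((hq y hy).trans (hmono y (le_max_left _ _)))
    · exact (min_le_right _ _).trans ((hq' y hy).trans (hmono y (le_max_right _ _)))
  intro y _
  -- `V j k`: the noise sends the whole ball of radius `1 / (k + 1)` around `y` into `U` at time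
  -- `j + 1`. By continuity these events cover the recurrence event of `y`.
  set V : ℕ → ℕ → Set Ω := fun j k =>
    {ω | ∀ y' ∈ Metric.ball y (1 / (k + 1)), F (j + 1) ω y' ∈ U}
  have hcover : {ω | ∃ᶠ n in atTop, F n ω y ∈ A} ⊆ ⋃ j, ⋃ k, V j k := fun ω hω => by
    obtain ⟨n, hn, hnA⟩ := (frequently_atTop.1 hω) 1
    obtain ⟨j, rfl⟩ := Nat.exists_eq_add_of_le' hn
    have hcont : Continuous (F (j + 1) ω) := by
      simpa only [funext (h.eq_wordAct (j + 1) ω)] using continuous_wordAct hf _ _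
    obtain ⟨r, hr, hball⟩ := Metric.isOpen_iff.1 (hU.preimage hcont) y (hAU hnA)
    obtain ⟨k, hk⟩ := exists_nat_one_div_lt hr
    exact mem_iUnion₂.2 ⟨j, k, fun y' hy' => hball (Metric.ball_subset_ball hk.le hy')⟩
  obtain ⟨j, k, hV⟩ : ∃ j k, P (V j k) ≠ 0 := by
    by_contra! hV
    have := measure_mono_null hcover (measure_iUnion_null fun j => measure_iUnion_null (hV j))
    simp [hrec y] at this
  refine ⟨Metric.ball y (1 / (k + 1)),
    mem_nhdsWithin_of_mem_nhds (Metric.ball_mem_nhds _ (by positivity)),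
    j + 1, P (V j k), hV, prob_le_one, fun y' hy' => measure_mono fun ω hω => ?_⟩
  exact ⟨j + 1, Finset.mem_Icc.2 ⟨by omega, le_rfl⟩, hω y' hy'⟩

variable [Countable ι] [MeasurableSingletonClass ι]

lemma measurable_iSup (h : IsRandomDynamicalSystem P μ f g F) (hf : ∀ i, Measurable (f i))
    (n : ℕ) (x : ℝ) :
    Measurable[⨆ k ∈ Iio n, MeasurableSpace.comap (g k) ‹_›] fun ω => F n ω x := by
  induction n with
  | zero => simp only [h.zero]; exact measurable_const
  | succ n ih =>
    simp only [h.succ]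
    refine (measurable_from_prod_countable_left (f := fun q : ℝ × ι => f q.2 q.1) hf).comp
      (Measurable.prodMk ?_ ?_)
    · exact ih.mono (biSup_mono fun k hk => lt_trans hk (Nat.lt_succ_self n)) le_rfl
    · exact (comap_measurable (g n)).mono
        (le_biSup (fun k => MeasurableSpace.comap (g k) _) (show n ∈ Iio (n + 1) by simp)) le_rfl

lemma measurable (h : IsRandomDynamicalSystem P μ f g F) (hf : ∀ i, Measurable (f i))
    (n : ℕ) (x : ℝ) : Measurable fun ω => F n ω x :=
  (h.measurable_iSup hf n x).mono (iSup₂_le fun k _ => (h.measurable_letter k).comap_le) le_rfl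

lemma isProbabilityMeasure_map [IsProbabilityMeasure P] (h : IsRandomDynamicalSystem P μ f g F)
    (hf : ∀ i, Measurable (f i)) (n : ℕ) (x : ℝ) :
    IsProbabilityMeasure (P.map fun ω => F n ω x) :=
  Measure.isProbabilityMeasure_map (h.measurable hf n x).aemeasurable

lemma indepFun_future (h : IsRandomDynamicalSystem P μ f g F) (hf : ∀ i, Measurable (f i))
    (n : ℕ) (x : ℝ) : IndepFun (fun ω => F n ω x) (fun ω k => g (n + k) ω) P := by
  rw [IndepFun_iff_Indep]
  refine indep_of_indep_of_le (indep_iSup_of_disjoint (fun k => (h.measurable_letter k).comap_le)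
    h.iIndepFun_letter.iIndep (S := Iio n) (T := Ici n) (Iio_disjoint_Ici le_rfl))
    (h.measurable_iSup hf n x).comap_le ?_
  refine Measurable.comap_le ((@measurable_pi_iff _ _ _ (⨆ k ∈ Ici n, _) _ _).2 fun k => ?_)
  exact (comap_measurable (g (n + k))).mono
    (le_biSup (fun k => MeasurableSpace.comap (g k) _) (show n ≤ n + k by omega)) le_rfl

lemma map_prod_future [IsProbabilityMeasure P] (h : IsRandomDynamicalSystem P μ f g F)
    (hf : ∀ i, Measurable (f i)) (n : ℕ) (x : ℝ) :
    P.map (fun ω => (F n ω x, fun k => g (n + k) ω)) =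
      (P.map fun ω => F n ω x).prod (Measure.infinitePi fun _ => μ) := by
  rw [← h.map_future n, ← indepFun_iff_map_prod_eq_prod_map_map (h.measurable hf n x).aemeasurable
    (measurable_pi_lambda _ fun k => h.measurable_letter _).aemeasurable]
  exact h.indepFun_future hf n x

lemma map_succ_apply [Fintype ι] [IsProbabilityMeasure P] (h : IsRandomDynamicalSystem P μ f g F)
    (hf : ∀ i, Measurable (f i)) (n : ℕ) (x : ℝ) {B : Set ℝ} (hB : MeasurableSet B) :
    P.map (fun ω => F (n + 1) ω x) B = ∑ i, μ {i} * P.map (fun ω => F n ω x) (f i ⁻¹' B) := by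
  have hΦ : Measurable fun p : ℝ × ι => f p.2 p.1 := measurable_from_prod_countable_left hf
  have hindep : IndepFun (fun ω => F n ω x) (g n) P :=
    (h.indepFun_future hf n x).comp measurable_id (measurable_pi_apply 0)
  have hprod : P.map (fun ω => (F n ω x, g n ω)) = (P.map fun ω => F n ω x).prod μ := by
    rw [← h.map_letter n, ← indepFun_iff_map_prod_eq_prod_map_map
      (h.measurable hf n x).aemeasurable (h.measurable_letter n).aemeasurable]
    exact hindep
  have := h.isProbabilityMeasure
  have hcomp : (fun ω => F (n + 1) ω x) =
      (fun p : ℝ × ι => f p.2 p.1) ∘ fun ω => (F n ω x, g n ω) := funext fun ω => h.succ n ω x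
  rw [hcomp, ← Measure.map_map hΦ ((h.measurable hf n x).prodMk (h.measurable_letter n)), hprod,
    Measure.map_apply hΦ hB, Measure.prod_apply_symm (hΦ hB), lintegral_fintype]
  exact Finset.sum_congr rfl fun i _ => mul_comm _ _

lemma hitting_le [IsProbabilityMeasure P] (h : IsRandomDynamicalSystem P μ f g F)
    (hf : ∀ i, Measurable (f i)) {K J : Set ℝ} (hK : MeasurableSet K) (hJ : MeasurableSet J)
    {M : ℕ} {q : ℝ≥0∞} (hq : ∀ y ∈ K, q ≤ P {ω | ∃ j ∈ Finset.Icc 1 M, F j ω y ∈ J})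
    (n : ℕ) (x : ℝ) :
    q * P.map (fun ω => F n ω x) K ≤ ∑ j ∈ Finset.Icc 1 M, P.map (fun ω => F (n + j) ω x) J := by
  have := h.isProbabilityMeasure
  set ρ := Measure.infinitePi fun _ : ℕ => μ
  have hmeas : ∀ j, Measurable fun p : ℝ × (ℕ → ι) => wordAct f p.2 j p.1 :=
    measurable_wordAct hf
  set S := {p : ℝ × (ℕ → ι) | p.1 ∈ K ∧ ∃ j ∈ Finset.Icc 1 M, wordAct f p.2 j p.1 ∈ J}
  have hS : MeasurableSet S := by
    have : S = Prod.fst ⁻¹' K ∩ ⋃ j ∈ Finset.Icc 1 M, (fun p => wordAct f p.2 j p.1) ⁻¹' J := by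
      ext; simp [S]
    rw [this]
    exact (measurable_fst hK).inter (Finset.measurableSet_biUnion _ fun j _ => hmeas j hJ)
  have hρ : ∀ y ∈ K, q ≤ ρ (Prod.mk y ⁻¹' S) := fun y hy => by
    rw [show ρ = _ from (h.map_future 0).symm,
      Measure.map_apply (measurable_pi_lambda _ fun k => h.measurable_letter _)
        (measurable_prodMk_left hS)]
    convert hq y hy using 2
    ext ω
    simp only [S, mem_preimage, mem_ofPred_eq, zero_add, h.eq_wordAct, hy, true_and]
  calc q * P.map (fun ω => F n ω x) K
      = ∫⁻ y, K.indicator (fun _ => q) y ∂P.map (fun ω => F n ω x) := by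
        rw [lintegral_indicator_const hK, mul_comm]
    _ ≤ ∫⁻ y, ρ (Prod.mk y ⁻¹' S) ∂P.map (fun ω => F n ω x) := by
        refine lintegral_mono fun y => ?_
        by_cases hy : y ∈ K
        · simpa [indicator_of_mem hy] using hρ y hy
        · simp [indicator_of_notMem hy]
    _ = P {ω | F n ω x ∈ K ∧ ∃ j ∈ Finset.Icc 1 M, F (n + j) ω x ∈ J} := by
        rw [← Measure.prod_apply hS, ← h.map_prod_future hf n x, Measure.map_apply _ hS]
        · simp only [S, preimage_ofPred_eq, h.add_eq_wordAct]
        · exact (h.measurable hf n x).prodMk (measurable_pi_lambda _ fun k => h.measurable_letter _)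
    _ ≤ P (⋃ j ∈ Finset.Icc 1 M, {ω | F (n + j) ω x ∈ J}) :=
        measure_mono fun ω ⟨_, j, hj, hJ⟩ => mem_biUnion hj hJ
    _ ≤ ∑ j ∈ Finset.Icc 1 M, P.map (fun ω => F (n + j) ω x) J := by
        refine (measure_biUnion_finset_le _ _).trans_eq (Finset.sum_congr rfl fun j _ => ?_)
        rw [Measure.map_apply (h.measurable hf _ x) hJ]
        rfl

end IsRandomDynamicalSystem

section Occupation

variable {Ω : Type*} [MeasurableSpace Ω] {P : Measure Ω} {F : ℕ → Ω → ℝ → ℝ}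

noncomputable def occupationMeasure (P : Measure Ω) (F : ℕ → Ω → ℝ → ℝ) (x : ℝ) (N : ℕ) :
    Measure ℝ :=
  ∑ n ∈ Finset.range N, P.map fun ω => F n ω x

lemma occupationMeasure_apply (x : ℝ) (N : ℕ) (B : Set ℝ) :
    occupationMeasure P F x N B = ∑ n ∈ Finset.range N, P.map (fun ω => F n ω x) B :=
  Measure.finsetSum_apply _ _ _

instance [IsFiniteMeasure P] (x : ℝ) (N : ℕ) : IsFiniteMeasure (occupationMeasure P F x N) := by
  unfold occupationMeasure; infer_instance

lemma tendsto_occupationMeasure_real [IsFiniteMeasure P] {x : ℝ}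
    (hF : ∀ n, Measurable fun ω => F n ω x) {A : Set ℝ} (hA : MeasurableSet A)
    (hrec : P {ω | ∃ᶠ n in atTop, F n ω x ∈ A} ≠ 0) :
    Tendsto (fun N => (occupationMeasure P F x N).real A) atTop atTop := by
  have htsum : ∑' n, P {ω | F n ω x ∈ A} = ∞ := by
    by_contra hne
    refine hrec (measure_mono_null (fun ω hω => ?_) (measure_limsup_atTop_eq_zero hne))
    exact mem_limsup_iff_frequently_mem.2 hω
  rw [← ENNReal.tendsto_ofReal_nhds_top]
  simp_rw [fun N => ofReal_measureReal (μ := occupationMeasure P F x N) (s := A),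
    occupationMeasure_apply, Measure.map_apply (hF _) hA]
  exact htsum ▸ ENNReal.tendsto_nat_tsum _

end Occupation

namespace IsRandomDynamicalSystem

variable {ι Ω : Type*} [MeasurableSpace Ω] {P : Measure Ω} [IsProbabilityMeasure P]
  [MeasurableSpace ι] [Fintype ι] [MeasurableSingletonClass ι] {μ : Measure ι}
  {f : ι → ℝ → ℝ} {g : ℕ → Ω → ι} {F : ℕ → Ω → ℝ → ℝ}

lemma occupationMeasure_add_map_apply (h : IsRandomDynamicalSystem P μ f g F)
    (hf : ∀ i, Measurable (f i)) (x : ℝ) (N : ℕ) {B : Set ℝ} (hB : MeasurableSet B) :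
    occupationMeasure P F x N B + P.map (fun ω => F N ω x) B =
      ∑ i, μ {i} * occupationMeasure P F x N (f i ⁻¹' B) + P.map (fun ω => F 0 ω x) B := by
  simp_rw [occupationMeasure_apply, ← Finset.sum_range_succ, Finset.sum_range_succ',
    h.map_succ_apply hf _ x hB, Finset.mul_sum]
  rw [Finset.sum_comm]

lemma abs_occupationMeasure_real_sub_sum_le (h : IsRandomDynamicalSystem P μ f g F)
    (hf : ∀ i, Measurable (f i)) (x : ℝ) (N : ℕ) {B : Set ℝ} (hB : MeasurableSet B) :
    |(occupationMeasure P F x N).real B -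
      ∑ i, μ.real {i} * (occupationMeasure P F x N).real (f i ⁻¹' B)| ≤ 1 := by
  have := h.isProbabilityMeasure
  have key := congrArg ENNReal.toReal (h.occupationMeasure_add_map_apply hf x N hB)
  have hfin : ∀ i, μ {i} * occupationMeasure P F x N (f i ⁻¹' B) ≠ ∞ := fun i =>
    ENNReal.mul_ne_top (measure_ne_top _ _) (measure_ne_top _ _)
  rw [ENNReal.toReal_add (measure_ne_top _ _) (measure_ne_top _ _), ENNReal.toReal_add
    (ENNReal.sum_ne_top.2 fun i _ => hfin i) (measure_ne_top _ _),
    ENNReal.toReal_sum fun i _ => hfin i] at key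
  simp only [ENNReal.toReal_mul, ← measureReal_def] at key
  have hlaw : ∀ n, (P.map fun ω => F n ω x).real B ≤ 1 := fun n => by
    have := h.isProbabilityMeasure_map hf n x
    exact measureReal_le_one
  have h0 := hlaw 0
  have hN := hlaw N
  rw [abs_le]
  constructor <;> linarith [measureReal_nonneg (μ := P.map fun ω => F 0 ω x) (s := B),
    measureReal_nonneg (μ := P.map fun ω => F N ω x) (s := B)]

lemma mul_occupationMeasure_le (h : IsRandomDynamicalSystem P μ f g F)
    (hf : ∀ i, Measurable (f i)) {K U : Set ℝ} (hK : MeasurableSet K) (hU : MeasurableSet U)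
    {M : ℕ} {q : ℝ≥0∞} (hq : ∀ y ∈ K, q ≤ P {ω | ∃ j ∈ Finset.Icc 1 M, F j ω y ∈ U})
    (x : ℝ) (N : ℕ) :
    q * occupationMeasure P F x N K ≤ M * occupationMeasure P F x (N + M) U := by
  rw [occupationMeasure_apply, occupationMeasure_apply, Finset.mul_sum]
  calc ∑ n ∈ Finset.range N, q * P.map (fun ω => F n ω x) K
      ≤ ∑ n ∈ Finset.range N, ∑ j ∈ Finset.Icc 1 M, P.map (fun ω => F (n + j) ω x) U :=
        Finset.sum_le_sum fun n _ => h.hitting_le hf hK hU hq n x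
    _ = ∑ j ∈ Finset.Icc 1 M, ∑ n ∈ (Finset.range N).map (addRightEmbedding j),
          P.map (fun ω => F n ω x) U := by
        rw [Finset.sum_comm]
        simp only [Finset.sum_map, addRightEmbedding_apply]
    _ ≤ ∑ j ∈ Finset.Icc 1 M, ∑ n ∈ Finset.range (N + M), P.map (fun ω => F n ω x) U := by
        refine Finset.sum_le_sum fun j hj => Finset.sum_le_sum_of_subset fun n hn => ?_
        obtain ⟨k, hk, rfl⟩ := Finset.mem_map.1 hn
        simp only [Finset.mem_range, addRightEmbedding_apply] at hk ⊢
        have := (Finset.mem_Icc.1 hj).2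
        omega
    _ = M * ∑ n ∈ Finset.range (N + M), P.map (fun ω => F n ω x) U := by
        simp

lemma occupationMeasure_add_le (h : IsRandomDynamicalSystem P μ f g F)
    (hf : ∀ i, Measurable (f i)) (x : ℝ) (N M : ℕ) (B : Set ℝ) :
    occupationMeasure P F x (N + M) B ≤ occupationMeasure P F x N B + M := by
  rw [occupationMeasure_apply, occupationMeasure_apply, Finset.sum_range_add]
  gcongr
  calc ∑ n ∈ Finset.range M, P.map (fun ω => F (N + n) ω x) B
      ≤ ∑ n ∈ Finset.range M, 1 := Finset.sum_le_sum fun n _ => by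
        have := h.isProbabilityMeasure_map hf (N + n) x
        exact prob_le_one
    _ = M := by simp

lemma occupationMeasure_real_le (h : IsRandomDynamicalSystem P μ f g F)
    (hf : ∀ i, Continuous (f i)) {A U : Set ℝ} (hAU : A ⊆ U) (hU : IsOpen U)
    (hrec : ∀ x, P {ω | ∃ᶠ n in atTop, F n ω x ∈ A} = 1) {K : Set ℝ} (hK : IsCompact K) (x : ℝ)
    (hUpos : ∀ᶠ N in atTop, 1 ≤ (occupationMeasure P F x N).real U) :
    ∃ C, ∀ᶠ N in atTop,
      (occupationMeasure P F x N).real K ≤ C * (occupationMeasure P F x N).real U := by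
  have hfm : ∀ i, Measurable (f i) := fun i => (hf i).measurable
  obtain ⟨M, q, hq0, hq1, hq⟩ := h.exists_forall_le_hitting hf hAU hU hrec hK
  refine ⟨M * (M + 1) / q.toReal, hUpos.mono fun N hN => ?_⟩
  have hle : q.toReal * (occupationMeasure P F x N).real K ≤
      M * ((occupationMeasure P F x N).real U + M) := by
    have := (h.mul_occupationMeasure_le hfm hK.measurableSet hU.measurableSet hq x N).trans
      (mul_le_mul_right (h.occupationMeasure_add_le hfm x N M U) _)
    have := ENNReal.toReal_mono (by finiteness) this
    simpa [ENNReal.toReal_mul, ENNReal.toReal_add, measureReal_def] using this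
  have hqpos : 0 < q.toReal := ENNReal.toReal_pos hq0 (ne_top_of_le_ne_top ENNReal.one_ne_top hq1)
  rw [div_mul_eq_mul_div, le_div_iff₀ hqpos]
  nlinarith [sq_nonneg (M : ℝ)]

end IsRandomDynamicalSystem

theorem rds_recurrent_admits_radon_stationary_measure_general
    {Ω : Type*} [MeasurableSpace Ω] (P : Measure Ω) [IsProbabilityMeasure P]
    {ι : Type*} [Fintype ι] [MeasurableSpace ι] [MeasurableSingletonClass ι]
    (f : ι → ℝ → ℝ)
    (hf : ∀ i, StrictMono (f i) ∧ Function.Bijective (f i))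
    (g : ℕ → Ω → ι) (hgmeas : ∀ n, Measurable (g n))
    (hindep : iIndepFun g P)
    (μ : Measure ι) [IsProbabilityMeasure μ] (hlaw : ∀ n, Measure.map (g n) P = μ)
    (F : ℕ → Ω → ℝ → ℝ)
    (hF0 : ∀ ω x, F 0 ω x = x)
    (hFS : ∀ n ω x, F (n + 1) ω x = f (g n ω) (F n ω x))
    (a b : ℝ)
    (hrec : ∀ x : ℝ, P {ω | ∃ᶠ n in atTop, F n ω x ∈ Set.Icc a b} = 1) :
    ∃ ν : Measure ℝ, ν ≠ 0 ∧ IsFiniteMeasureOnCompacts ν ∧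
      ∀ A : Set ℝ, MeasurableSet A → ν A = ∑ i, μ {i} * ν (f i ⁻¹' A) := by
  set φ : ι → ℝ ≃o ℝ := fun i => StrictMono.orderIsoOfSurjective (f i) (hf i).1 (hf i).2.2
  have hcont : ∀ i, Continuous (f i) := fun i => (φ i).continuous
  have hmeas : ∀ i, Measurable (f i) := fun i => (hcont i).measurable
  have h : IsRandomDynamicalSystem P μ f g F := ⟨hgmeas, hindep, hlaw, hF0, hFS⟩
  set σ := occupationMeasure P F a
  set U := Ioo (a - 1) (b + 1)
  have hAU : Icc a b ⊆ U := Icc_subset_Ioo (by linarith) (by linarith)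
  have hm : Tendsto (fun N => (σ N).real U) atTop atTop :=
    tendsto_atTop_mono (fun N => measureReal_mono hAU) (tendsto_occupationMeasure_real
      (h.measurable hmeas · a) measurableSet_Icc (by rw [hrec a]; exact one_ne_zero))
  obtain ⟨ν, hν0, hνloc, hνstat⟩ := exists_stationary_measure_of_almost_stationary
    (fun i => μ {i}) (fun i => measure_ne_top _ _) φ σ (fun N => (σ N).real U) 1 hm
    (fun s t => (h.occupationMeasure_real_le hcont hAU isOpen_Ioo hrec isCompact_Icc a
      (hm.eventually_ge_atTop 1)).imp fun C hC =>
        hC.mono fun N hN => (measureReal_mono Ioc_subset_Icc_self).trans hN)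
    (fun s t N => h.abs_occupationMeasure_real_sub_sum_le hmeas a N measurableSet_Ioc)
    (s₀ := a - 1) (t₀ := b + 1)
    (Eventually.of_forall fun N => measureReal_mono Ioo_subset_Ioc_self)
  exact ⟨ν, hν0, inferInstance, hνstat⟩

/-- a recurrent RDS (some compact interval is almost surely visited
infinitely often from every starting point) admits a nonzero Radon stationary measure. -/
theorem rds_recurrent_admits_radon_stationary_measure
    {Ω : Type*} [MeasurableSpace Ω] (P : Measure Ω) [IsProbabilityMeasure P]
    {ι : Type*} [Fintype ι] [MeasurableSpace ι] [MeasurableSingletonClass ι]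
    (f : ι → ℝ → ℝ)
    (hf : ∀ i, StrictMono (f i) ∧ Function.Bijective (f i))
    (g : ℕ → Ω → ι) (hgmeas : ∀ n, Measurable (g n))
    (hindep : iIndepFun g P)
    (μ : Measure ι) [IsProbabilityMeasure μ] (hlaw : ∀ n, Measure.map (g n) P = μ)
    (F : ℕ → Ω → ℝ → ℝ)
    (hF0 : ∀ ω x, F 0 ω x = x)
    (hFS : ∀ n ω x, F (n + 1) ω x = f (g n ω) (F n ω x))
    (hshift : ∀ x : ℝ, 0 < μ {i | f i x < x} ∧ 0 < μ {i | x < f i x})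
    (a b : ℝ) (hab : a ≤ b)
    (hrec : ∀ x : ℝ, P {ω | ∃ᶠ n in atTop, F n ω x ∈ Set.Icc a b} = 1) :
    ∃ ν : Measure ℝ, ν ≠ 0 ∧ IsFiniteMeasureOnCompacts ν ∧
      ∀ A : Set ℝ, MeasurableSet A → ν A = ∑ i, μ {i} * ν (f i ⁻¹' A) :=
  rds_recurrent_admits_radon_stationary_measure_general P f hf g hgmeas hindep μ hlaw F hF0 hFS a b
    hrec
end
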